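/- arXiv:2002.08737 — 10 statements merged into one kernel-verified Lean document; each statement's English description precedes it below -/
import Mathlib

section
/- Let K be a field and let B be an n-dimensional abelian Lie subalgebra of gl(n,K) (i.e., an n-dimensional subspace of n×n matrices over K whose elements pairwise commute). Suppose there exists a linear functional α on K^n such that the orbital map Q : B → (K^n)*, Q(a) = α ∘ a, is surjective (equivalently, bijective by dimension count). Then B is a maximal abelian subalgebra of gl(n,K): any matrix X ∈ gl(n,K) commuting with every element of B belongs to B. -/
open Matrix

/-- An n-dimensional abelian subalgebra of gl(n,K) with an open
contragredient orbit (the orbital map `a ↦ α ∘ a` is surjective onto the dual)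
is a maximal abelian subalgebra. -/
theorem stmt0 {K : Type*} [Field K] {n : ℕ}
    (B : Submodule K (Matrix (Fin n) (Fin n) K))
    (hdim : Module.finrank K B = n)
    (hcomm : ∀ a ∈ B, ∀ b ∈ B, a * b = b * a)
    (α : (Fin n → K) →ₗ[K] K)
    (hsurj : ∀ f : (Fin n → K) →ₗ[K] K, ∃ a ∈ B, α ∘ₗ Matrix.mulVecLin a = f) :
    ∀ X : Matrix (Fin n) (Fin n) K, (∀ b ∈ B, X * b = b * X) → X ∈ B := by
  intro X hX
  obtain ⟨a, haB, ha⟩ := hsurj (α ∘ₗ X.mulVecLin)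
  have ha' : ∀ w : Fin n → K, α (a *ᵥ w) = α (X *ᵥ w) := fun w =>
    congrArg (fun f : (Fin n → K) →ₗ[K] K => f w) ha
  -- every element of B kills (X - a) after applying α
  have hall : ∀ b ∈ B, ∀ v : Fin n → K, α (b *ᵥ ((X - a) *ᵥ v)) = 0 := by
    intro b hb v
    have hcb : (X - a) * b = b * (X - a) := by
      rw [sub_mul, mul_sub, hX b hb, hcomm a haB b hb]
    rw [mulVec_mulVec, ← hcb, ← mulVec_mulVec, sub_mulVec, map_sub, ← ha',
      sub_self]
  have key : ∀ v : Fin n → K, (X - a) *ᵥ v = 0 := by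
    intro v
    funext i
    obtain ⟨b, hb, hfb⟩ := hsurj (LinearMap.proj i)
    calc ((X - a) *ᵥ v) i
        = (α ∘ₗ Matrix.mulVecLin b) ((X - a) *ᵥ v) := by rw [hfb]; rfl
      _ = 0 := hall b hb v
  have h0 : X - a = 0 := by
    ext i j
    have := congrFun (key (Pi.single j 1)) i
    simpa [mulVec_single] using this
  have hXa : X = a := sub_eq_zero.mp h0
  rwa [hXa]
end

section
/- Let B be an n-dimensional subspace of n×n matrices over a field K, consisting of pairwise commuting matrices and containing the identity matrix. Suppose there exists α ∈ (K^n)* such that a ↦ α∘a is a linear isomorphism from B onto (K^n)*. Then B is closed under matrix multiplication; consequently, for any a₁,…,a_k ∈ B, the unital K-algebra K[a₁,…,a_k] generated by them equals a subspace of B and has dimension at most n. -/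
open Matrix

/-- An n-dimensional commuting subspace B of M(n,K) containing 1,
with an open contragredient orbit, is closed under matrix multiplication;
consequently the algebra generated by any finite family of its elements is
contained in B and has dimension at most n. -/
theorem stmt1 {K : Type*} [Field K] {n : ℕ}
    (B : Submodule K (Matrix (Fin n) (Fin n) K))
    (hdim : Module.finrank K B = n)
    (hone : (1 : Matrix (Fin n) (Fin n) K) ∈ B)
    (hcomm : ∀ a ∈ B, ∀ b ∈ B, a * b = b * a)
    (α : (Fin n → K) →ₗ[K] K)
    (hbij : Function.Bijective
      (fun a : B => α ∘ₗ Matrix.mulVecLin (a : Matrix (Fin n) (Fin n) K))) :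
    (∀ a ∈ B, ∀ b ∈ B, a * b ∈ B) ∧
    ∀ (k : ℕ) (a : Fin k → Matrix (Fin n) (Fin n) K), (∀ i, a i ∈ B) →
      (Algebra.adjoin K (Set.range a)).toSubmodule ≤ B ∧
      Module.finrank K (Algebra.adjoin K (Set.range a)) ≤ n := by
  have hmul : ∀ a ∈ B, ∀ b ∈ B, a * b ∈ B := by
    intro a ha b hb
    obtain ⟨c, hc⟩ := hbij.2 (α ∘ₗ Matrix.mulVecLin (a * b))
    set m : Matrix (Fin n) (Fin n) K := a * b - (c : Matrix (Fin n) (Fin n) K) with hm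
    -- α kills the range of m
    have hz : ∀ y, α (m *ᵥ y) = 0 := by
      intro y
      have := LinearMap.congr_fun hc y
      simp only [LinearMap.comp_apply, Matrix.mulVecLin_apply] at this
      have hsub : m *ᵥ y = (a * b) *ᵥ y - (c : Matrix (Fin n) (Fin n) K) *ᵥ y := by
        rw [hm, Matrix.sub_mulVec]
      rw [hsub, map_sub, this, sub_self]
    -- m commutes with everything in B
    have hcm : ∀ d ∈ B, d * m = m * d := by
      intro d hd
      have h1 : d * (a * b) = (a * b) * d := by
        calc d * (a * b) = (d * a) * b := by rw [mul_assoc]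
          _ = (a * d) * b := by rw [hcomm d hd a ha]
          _ = a * (d * b) := by rw [mul_assoc]
          _ = a * (b * d) := by rw [hcomm d hd b hb]
          _ = (a * b) * d := by rw [mul_assoc]
      have h2 : d * (c : Matrix (Fin n) (Fin n) K) = c * d := hcomm d hd c c.2
      rw [hm, mul_sub, sub_mul, h1, h2]
    -- every mulVec of m is zero
    have hmv : ∀ x, m *ᵥ x = 0 := by
      intro x
      funext i
      obtain ⟨d, hd⟩ := hbij.2 (LinearMap.proj i)
      have := LinearMap.congr_fun hd (m *ᵥ x)
      simp only [LinearMap.comp_apply, Matrix.mulVecLin_apply, LinearMap.proj_apply] at this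
      rw [Pi.zero_apply, ← this, Matrix.mulVec_mulVec, hcm d d.2,
        ← Matrix.mulVec_mulVec, hz]
    have hm0 : m = 0 := by
      ext i j
      have := congrFun (hmv (Pi.single j 1)) i
      simpa [Matrix.mulVec_single] using this
    have : a * b = (c : Matrix (Fin n) (Fin n) K) := by
      have := sub_eq_zero.mp hm0
      exact this
    rw [this]
    exact c.2
  refine ⟨hmul, fun k a ha => ?_⟩
  have hle : (Algebra.adjoin K (Set.range a)).toSubmodule ≤ B := by
    have : Algebra.adjoin K (Set.range a) ≤
        B.toSubalgebra hone (fun x y hx hy => hmul x hx y hy) := by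
      apply Algebra.adjoin_le
      rintro x ⟨i, rfl⟩
      exact ha i
    intro x hx
    exact this hx
  refine ⟨hle, ?_⟩
  calc Module.finrank K (Algebra.adjoin K (Set.range a)) =
      Module.finrank K (Algebra.adjoin K (Set.range a)).toSubmodule := rfl
    _ ≤ Module.finrank K B := Submodule.finrank_mono hle
    _ = n := hdim
end

section
/- In M(4,K), the matrices E₁₃, E₁₄, E₂₃, E₂₄ pairwise commute, and the unital subalgebra of M(4,K) they generate is 5-dimensional, with basis (I₄, E₁₃, E₁₄, E₂₃, E₂₄). In particular, four commuting 4×4 matrices can generate an algebra of dimension strictly greater than 4. -/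
/-!
The four matrix units `E₁₃, E₁₄, E₂₃, E₂₄` have their row indices in `{1, 2}` and their column
indices in `{3, 4}`, so any product of two of them vanishes. Hence they commute, and the span of
`1` together with them is already closed under multiplication, so it is the unital algebra they
generate. That span is `5`-dimensional: the four units are part of the standard basis, and `1` is
not in their span because all of them vanish at the diagonal entry `(1, 1)`.
-/

open Matrix

theorem Submodule.span_insert_one_mul_self_le {R A : Type*} [CommSemiring R] [Semiring A]
    [Algebra R A] {s : Set A} (hs : ∀ x ∈ s, ∀ y ∈ s, x * y = 0) :
    span R (insert 1 s) * span R (insert 1 s) ≤ span R (insert 1 s) := by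
  rw [span_mul_span, span_le]
  rintro _ ⟨x, hx, y, hy, rfl⟩
  rcases hx with rfl | hx
  · simpa only [one_mul] using subset_span hy
  rcases hy with rfl | hy
  · simpa only [mul_one] using subset_span (Set.mem_insert_of_mem 1 hx)
  · simp only [hs x hx y hy, SetLike.mem_coe, zero_mem]

open Submodule in
theorem Algebra.adjoin_toSubmodule_eq_span_insert_one {R A : Type*} [CommSemiring R] [Semiring A]
    [Algebra R A] {s : Set A} (hs : ∀ x ∈ s, ∀ y ∈ s, x * y = 0) :
    Subalgebra.toSubmodule (adjoin R s) = span R (insert 1 s) := by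
  rw [← adjoin_insert_one]
  refine adjoin_eq_span_of_subset R fun x hx ↦ ?_
  induction hx using Submonoid.closure_induction with
  | mem x hx => exact subset_span hx
  | one => exact subset_span (Set.mem_insert 1 s)
  | mul x y _ _ hx hy => exact span_insert_one_mul_self_le hs (mul_mem_mul hx hy)

theorem Matrix.linearIndependent_of_eq_single_one {ι m n R : Type*} [Fintype m] [Finite n]
    [DecidableEq m] [DecidableEq n] [Semiring R] {v : ι → Matrix m n R} {p : ι → m × n}
    (hp : p.Injective) (hv : ∀ k, v k = single (p k).1 (p k).2 1) : LinearIndependent R v := by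
  have hv' : v = stdBasis R m n ∘ p :=
    funext fun k ↦ (hv k).trans (stdBasis_eq_single R (p k).1 (p k).2).symm
  exact hv' ▸ (stdBasis R m n).linearIndependent.comp p hp

theorem Matrix.one_notMem_span_of_forall_apply_self_eq_zero {n R : Type*} [DecidableEq n]
    [CommSemiring R] [Nontrivial R] {s : Set (Matrix n n R)} (i : n)
    (hs : ∀ M ∈ s, M i i = 0) : (1 : Matrix n n R) ∉ Submodule.span R s := by
  intro h
  have hle : Submodule.span R s ≤ LinearMap.ker (entryLinearMap R R i i) :=
    Submodule.span_le.2 hs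
  simpa using hle h

theorem Matrix.linearIndependent_one_single_offDiagBlock {K : Type*} [Field K] :
    LinearIndependent K ![(1 : Matrix (Fin 4) (Fin 4) K), single 0 2 1, single 0 3 1,
      single 1 2 1, single 1 3 1] := by
  refine linearIndependent_finCons.2 ⟨?_, one_notMem_span_of_forall_apply_self_eq_zero 0 ?_⟩
  · exact linearIndependent_of_eq_single_one (p := ![(0, 2), (0, 3), (1, 2), (1, 3)])
      (by decide) fun k ↦ by fin_cases k <;> rfl
  · simp [range_cons]

/-- E₁₃, E₁₄, E₂₃, E₂₄ in M(4,K) pairwise commute and generate a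
unital subalgebra of dimension 5, with basis (I₄, E₁₃, E₁₄, E₂₃, E₂₄); in
particular its dimension exceeds 4. -/
theorem stmt2 {K : Type*} [Field K] :
    ∀ (A B C D : Matrix (Fin 4) (Fin 4) K),
      A = Matrix.single 0 2 1 → B = Matrix.single 0 3 1 →
      C = Matrix.single 1 2 1 → D = Matrix.single 1 3 1 →
      (A * B = B * A ∧ A * C = C * A ∧ A * D = D * A ∧
        B * C = C * B ∧ B * D = D * B ∧ C * D = D * C) ∧
      (Algebra.adjoin K ({A, B, C, D} : Set (Matrix (Fin 4) (Fin 4) K))).toSubmodule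
        = Submodule.span K ({1, A, B, C, D} : Set (Matrix (Fin 4) (Fin 4) K)) ∧
      LinearIndependent K ![1, A, B, C, D] ∧
      Module.finrank K
        (Algebra.adjoin K ({A, B, C, D} : Set (Matrix (Fin 4) (Fin 4) K))) = 5 ∧
      4 < Module.finrank K
        (Algebra.adjoin K ({A, B, C, D} : Set (Matrix (Fin 4) (Fin 4) K))) := by
  intro A B C D hA hB hC hD
  have hsq : ∀ x ∈ ({A, B, C, D} : Set (Matrix (Fin 4) (Fin 4) K)), ∀ y ∈ ({A, B, C, D} : Set _),
      x * y = 0 := by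
    subst hA hB hC hD
    simp only [Set.mem_insert_iff, Set.mem_singleton_iff]
    rintro x (rfl | rfl | rfl | rfl) y (rfl | rfl | rfl | rfl) <;>
      exact single_mul_single_of_ne _ _ _ _ (by decide) _
  have hcomm : ∀ x ∈ ({A, B, C, D} : Set _), ∀ y ∈ ({A, B, C, D} : Set _), x * y = y * x :=
    fun x hx y hy ↦ (hsq x hx y hy).trans (hsq y hy x hx).symm
  have hspan := Algebra.adjoin_toSubmodule_eq_span_insert_one (R := K) hsq
  have hli : LinearIndependent K ![1, A, B, C, D] := by
    subst hA hB hC hD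
    exact linearIndependent_one_single_offDiagBlock
  have hrank : Module.finrank K (Algebra.adjoin K ({A, B, C, D} : Set _)) = 5 := by
    have hrange : ({1, A, B, C, D} : Set _) = Set.range ![1, A, B, C, D] := by
      simp only [range_cons, range_empty, Set.union_empty, Set.singleton_union]
    rw [← Subalgebra.finrank_toSubmodule, hspan, hrange, finrank_span_eq_card hli,
      Fintype.card_fin]
  refine ⟨⟨?_, ?_, ?_, ?_, ?_, ?_⟩, hspan, hli, hrank, by omega⟩ <;>
    exact hcomm _ (by simp) _ (by simp)
end

section
/- Let B₁ and B₂ be abelian Lie subalgebras of gl(n,K) and form the semidirect product Lie algebras G₁ = B₁ ⋉ K^n and G₂ = B₂ ⋉ K^n, where B_i acts on K^n by matrix-vector multiplication and where K^n equals the derived ideal [G_i,G_i]. Then G₁ and G₂ are isomorphic as Lie algebras if and only if B₁ and B₂ are conjugate, i.e., there exists an invertible linear map φ : K^n → K^n with B₂ = φ B₁ φ^{-1}. Moreover every Lie algebra isomorphism ψ : G₁ → G₂ has the form ψ(a + x) = φ∘a∘φ^{-1} + (φ∘a∘φ^{-1})(x₀) + φ(x) for some invertible φ with φB₁φ^{-1}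 = B₂ and some x₀ ∈ K^n. -/
/-!
An isomorphism `ψ : B₁ ⋉ Kⁿ ≃ B₂ ⋉ Kⁿ` preserves derived ideals, and `Kⁿ` is the derived ideal of
`B₁ ⋉ Kⁿ`, so `ψ` restricts to a bijection `φ` of `Kⁿ`. Bracketing `(a, 0)` with `(0, x)` gives
`φ (a x) = ψ(a)₁ (φ x)`, i.e. `ψ(a)₁ = P a P⁻¹` for the matrix `P` of `φ`. Bracketing `(a, 0)` with
`(b, 0)` shows that `a ↦ φ⁻¹ ψ(a)₂` is a 1-cocycle of `B₁` with values in `Kⁿ`. It is a coboundary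
`a ↦ a y₀`: since `B₁ Kⁿ = Kⁿ`, Nakayama's lemma shows that `B₁` generates the unit ideal of the
commutative algebra it generates, and a cocycle on generators of the unit ideal is a coboundary.
Then `x₀ = φ y₀`. Conversely, conjugation by `P` together with `x ↦ P x` is an isomorphism.
-/

open Matrix

/-- Lie bracket of the semidirect product `B ⋉ Kⁿ`, where the abelian algebra `B`
of matrices acts on `Kⁿ` by matrix-vector multiplication. -/
def sdBra {K : Type*} [Field K] {n : ℕ}
    (B : Submodule K (Matrix (Fin n) (Fin n) K)) :
    (B × (Fin n → K)) → (B × (Fin n → K)) → (B × (Fin n → K)) :=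
  fun p q =>
    (0, Matrix.mulVec (p.1 : Matrix (Fin n) (Fin n) K) q.2
        - Matrix.mulVec (q.1 : Matrix (Fin n) (Fin n) K) p.2)

theorem exists_smul_eq_of_span_range_eq_top {A M ι : Type*} [CommRing A] [AddCommGroup M]
    [Module A M] {s : ι → A} (hs : Ideal.span (Set.range s) = ⊤) {h : ι → M}
    (hh : ∀ i j, s i • h j = s j • h i) : ∃ x, ∀ i, s i • x = h i := by
  suffices ∀ y ∈ Ideal.span (Set.range s), ∃ x, ∀ i, s i • x = y • h i by
    simpa using this 1 (hs ▸ Submodule.mem_top)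
  intro y hy
  induction hy using Submodule.span_induction with
  | mem y hy =>
    obtain ⟨j, rfl⟩ := hy
    exact ⟨h j, fun i => hh i j⟩
  | zero => exact ⟨0, by simp⟩
  | add y z _ _ hy hz =>
    obtain ⟨x, hx⟩ := hy
    obtain ⟨w, hw⟩ := hz
    exact ⟨x + w, fun i => by rw [smul_add, hx, hw, add_smul]⟩
  | smul a y _ hy =>
    obtain ⟨x, hx⟩ := hy
    exact ⟨a • x, fun i => by rw [smul_comm, hx, smul_smul, smul_eq_mul]⟩

theorem Ideal.eq_top_of_top_le_smul_top {A M : Type*} [CommRing A] [AddCommGroup M] [Module A M]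
    [Module.Finite A M] [FaithfulSMul A M] {I : Ideal A}
    (hI : ⊤ ≤ I • (⊤ : Submodule A M)) : I = ⊤ := by
  obtain ⟨r, hr1, hr0⟩ :=
    Submodule.exists_sub_one_mem_and_smul_eq_zero_of_fg_of_le_smul I ⊤ Module.Finite.fg_top hI
  have hr : r = 0 := FaithfulSMul.eq_of_smul_eq_smul fun m => by rw [zero_smul, hr0 m trivial]
  rw [hr, zero_sub] at hr1
  exact I.eq_top_of_isUnit_mem hr1 isUnit_one.neg

open scoped IsMulCommutative in
theorem Module.End.exists_forall_apply_eq_of_iSup_range_eq_top {R V ι : Type*} [CommRing R]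
    [AddCommGroup V] [Module R V] [Module.Finite R V] {ρ : ι → Module.End R V}
    (hcomm : ∀ i j, Commute (ρ i) (ρ j)) (hρ : ⨆ i, LinearMap.range (ρ i) = ⊤) {h : ι → V}
    (hh : ∀ i j, ρ i (h j) = ρ j (h i)) : ∃ x, ∀ i, ρ i x = h i := by
  let A := Algebra.adjoin R (Set.range ρ)
  have : IsMulCommutative A := Algebra.isMulCommutative_adjoin R <| by
    rintro _ ⟨i, rfl⟩ _ ⟨j, rfl⟩
    exact hcomm i j
  let s : ι → A := fun i => ⟨ρ i, Algebra.subset_adjoin ⟨i, rfl⟩⟩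
  have : Module.Finite A V := Module.Finite.of_restrictScalars_finite R A V
  have : FaithfulSMul A V := ⟨fun hab => Subtype.ext (LinearMap.ext hab)⟩
  let I : Ideal A := Ideal.span (Set.range s)
  have hI : ⊤ ≤ I • (⊤ : Submodule A V) := by
    have hle : ⨆ i, LinearMap.range (ρ i) ≤ (I • ⊤ : Submodule A V).restrictScalars R :=
      iSup_le fun i => by
        rintro _ ⟨w, rfl⟩
        change s i • w ∈ I • (⊤ : Submodule A V)
        exact Submodule.smul_mem_smul (Ideal.subset_span ⟨i, rfl⟩) Submodule.mem_top
    rw [hρ] at hle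
    exact fun v _ => hle Submodule.mem_top
  have hs : I = ⊤ := Ideal.eq_top_of_top_le_smul_top hI
  exact exists_smul_eq_of_span_range_eq_top hs hh

namespace sdBra

variable {K : Type*} [Field K] {n : ℕ} {B B₁ B₂ : Submodule K (Matrix (Fin n) (Fin n) K)}

@[simp]
theorem fst (p q : B × (Fin n → K)) : (sdBra B p q).1 = 0 := rfl

theorem inl_inr (a : B) (y : Fin n → K) : sdBra B (a, 0) (0, y) = (0, a.val *ᵥ y) := by
  simp [sdBra]

theorem inl_inl (a b : B) : sdBra B (a, 0) (b, 0) = 0 := by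
  simp [sdBra]

theorem prodCongr (e : B₁ ≃ₗ[K] B₂) (φ : (Fin n → K) ≃ₗ[K] (Fin n → K))
    (h : ∀ (a : B₁) x, φ (a.val *ᵥ x) = (e a).val *ᵥ φ x) (p q : B₁ × (Fin n → K)) :
    e.prodCongr φ (sdBra B₁ p q) = sdBra B₂ (e.prodCongr φ p) (e.prodCongr φ q) := by
  ext1
  · simp
  · simp [sdBra, h]

section Equiv

variable (ψ : (B₁ × (Fin n → K)) ≃ₗ[K] (B₂ × (Fin n → K)))

def vecPart : (Fin n → K) →ₗ[K] (Fin n → K) :=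
  LinearMap.snd K B₂ _ ∘ₗ ψ.toLinearMap ∘ₗ LinearMap.inr K B₁ _

variable {ψ}

theorem fst_apply_zero_left (hψ : ∀ p q, ψ (sdBra B₁ p q) = sdBra B₂ (ψ p) (ψ q))
    (hd₁ : Submodule.span K {x | ∃ a ∈ B₁, ∃ y : Fin n → K, a *ᵥ y = x} = ⊤)
    (x : Fin n → K) : (ψ (0, x)).1 = 0 := by
  have hle : Submodule.span K {x | ∃ a ∈ B₁, ∃ y : Fin n → K, a *ᵥ y = x} ≤
      LinearMap.ker (LinearMap.fst K B₂ _ ∘ₗ ψ.toLinearMap ∘ₗ LinearMap.inr K B₁ _) := by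
    rw [Submodule.span_le]
    rintro _ ⟨a, ha, y, rfl⟩
    simp [← inl_inr ⟨a, ha⟩, hψ]
  rw [hd₁] at hle
  exact hle Submodule.mem_top

theorem apply_zero_left (hψ : ∀ p q, ψ (sdBra B₁ p q) = sdBra B₂ (ψ p) (ψ q))
    (hd₁ : Submodule.span K {x | ∃ a ∈ B₁, ∃ y : Fin n → K, a *ᵥ y = x} = ⊤)
    (x : Fin n → K) : ψ (0, x) = (0, vecPart ψ x) :=
  Prod.ext (fst_apply_zero_left hψ hd₁ x) rfl

theorem apply_eq (hψ : ∀ p q, ψ (sdBra B₁ p q) = sdBra B₂ (ψ p) (ψ q))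
    (hd₁ : Submodule.span K {x | ∃ a ∈ B₁, ∃ y : Fin n → K, a *ᵥ y = x} = ⊤)
    (a : B₁) (x : Fin n → K) : ψ (a, x) = ((ψ (a, 0)).1, (ψ (a, 0)).2 + vecPart ψ x) := by
  rw [show ((a, x) : B₁ × (Fin n → K)) = (a, 0) + (0, x) by simp, map_add,
    apply_zero_left hψ hd₁]
  exact Prod.ext (add_zero _) rfl

theorem vecPart_bijective (hψ : ∀ p q, ψ (sdBra B₁ p q) = sdBra B₂ (ψ p) (ψ q))
    (hd₁ : Submodule.span K {x | ∃ a ∈ B₁, ∃ y : Fin n → K, a *ᵥ y = x} = ⊤) :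
    Function.Bijective (vecPart ψ) := by
  have hinj : Function.Injective (vecPart ψ) := by
    rw [injective_iff_map_eq_zero]
    intro x hx
    have : ψ (0, x) = 0 := by rw [apply_zero_left hψ hd₁, hx, Prod.mk_zero_zero]
    exact congrArg Prod.snd (ψ.map_eq_zero_iff.mp this)
  exact ⟨hinj, LinearMap.injective_iff_surjective.mp hinj⟩

theorem vecPart_mulVec (hψ : ∀ p q, ψ (sdBra B₁ p q) = sdBra B₂ (ψ p) (ψ q))
    (hd₁ : Submodule.span K {x | ∃ a ∈ B₁, ∃ y : Fin n → K, a *ᵥ y = x} = ⊤)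
    (a : B₁) (x : Fin n → K) : vecPart ψ (a.val *ᵥ x) = (ψ (a, 0)).1.val *ᵥ vecPart ψ x := by
  have h := congrArg Prod.snd (hψ (a, 0) (0, x))
  rw [inl_inr, apply_zero_left hψ hd₁, apply_zero_left hψ hd₁] at h
  simpa [sdBra] using h

theorem fst_mulVec_snd_comm (hψ : ∀ p q, ψ (sdBra B₁ p q) = sdBra B₂ (ψ p) (ψ q)) (a b : B₁) :
    (ψ (a, 0)).1.val *ᵥ (ψ (b, 0)).2 = (ψ (b, 0)).1.val *ᵥ (ψ (a, 0)).2 := by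
  have h := congrArg Prod.snd (hψ (a, 0) (b, 0))
  rw [inl_inl, map_zero] at h
  exact sub_eq_zero.mp h.symm

theorem exists_fst_apply_eq (hψ : ∀ p q, ψ (sdBra B₁ p q) = sdBra B₂ (ψ p) (ψ q))
    (hd₁ : Submodule.span K {x | ∃ a ∈ B₁, ∃ y : Fin n → K, a *ᵥ y = x} = ⊤) (b : B₂) :
    ∃ a : B₁, (ψ (a, 0)).1 = b := by
  refine ⟨(ψ.symm (b, 0)).1, ?_⟩
  have h := congrArg Prod.fst (ψ.apply_symm_apply (b, 0))
  rwa [← Prod.mk.eta (p := ψ.symm (b, 0)), apply_eq hψ hd₁] at h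

theorem exists_snd_apply_eq_fst_mulVec (hψ : ∀ p q, ψ (sdBra B₁ p q) = sdBra B₂ (ψ p) (ψ q))
    (h₁ : ∀ a ∈ B₁, ∀ b ∈ B₁, a * b = b * a)
    (hd₁ : Submodule.span K {x | ∃ a ∈ B₁, ∃ y : Fin n → K, a *ᵥ y = x} = ⊤) :
    ∃ x₀, ∀ a : B₁, (ψ (a, 0)).2 = (ψ (a, 0)).1.val *ᵥ x₀ := by
  let e := LinearEquiv.ofBijective (vecPart ψ) (vecPart_bijective hψ hd₁)
  have mulVec_symm (a : B₁) (v : Fin n → K) :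
      a.val *ᵥ e.symm v = e.symm ((ψ (a, 0)).1.val *ᵥ v) := by
    rw [e.eq_symm_apply, LinearEquiv.ofBijective_apply, vecPart_mulVec hψ hd₁]
    exact congrArg _ (e.apply_symm_apply v)
  have hcomm (a b : B₁) : Commute (toLinAlgEquiv' a.val) (toLinAlgEquiv' b.val) :=
    (show Commute a.val b.val from h₁ a a.2 b b.2).map toLinAlgEquiv'
  have hrange : ⨆ a : B₁, LinearMap.range (toLinAlgEquiv' a.val) = ⊤ := by
    rw [eq_top_iff, ← hd₁, Submodule.span_le]
    rintro _ ⟨a, ha, y, rfl⟩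
    exact Submodule.mem_iSup_of_mem ⟨a, ha⟩ ⟨y, rfl⟩
  obtain ⟨y₀, hy₀⟩ := Module.End.exists_forall_apply_eq_of_iSup_range_eq_top hcomm hrange
    (h := fun a => e.symm (ψ (a, 0)).2) fun a b => by
      simp only [toLinAlgEquiv'_apply, mulVec_symm, fst_mulVec_snd_comm hψ a b]
  refine ⟨e y₀, fun a => ?_⟩
  rw [LinearEquiv.ofBijective_apply, ← vecPart_mulVec hψ hd₁, ← toLinAlgEquiv'_apply, hy₀]
  exact (e.apply_symm_apply _).symm

theorem isUnit_det_toMatrix'_vecPart (hψ : ∀ p q, ψ (sdBra B₁ p q) = sdBra B₂ (ψ p) (ψ q))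
    (hd₁ : Submodule.span K {x | ∃ a ∈ B₁, ∃ y : Fin n → K, a *ᵥ y = x} = ⊤) :
    IsUnit (LinearMap.toMatrix' (vecPart ψ)).det := by
  rw [LinearMap.det_toMatrix']
  exact (LinearEquiv.ofBijective _ (vecPart_bijective hψ hd₁)).isUnit_det'

theorem fst_apply_eq_conj (hψ : ∀ p q, ψ (sdBra B₁ p q) = sdBra B₂ (ψ p) (ψ q))
    (hd₁ : Submodule.span K {x | ∃ a ∈ B₁, ∃ y : Fin n → K, a *ᵥ y = x} = ⊤) (a : B₁) :
    (ψ (a, 0)).1.val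
      = LinearMap.toMatrix' (vecPart ψ) * a.val * (LinearMap.toMatrix' (vecPart ψ))⁻¹ := by
  set P := LinearMap.toMatrix' (vecPart ψ)
  have hP : P * a.val = (ψ (a, 0)).1.val * P := ext_iff_mulVec.mpr fun x => by
    simp only [← mulVec_mulVec, P, LinearMap.toMatrix'_mulVec, vecPart_mulVec hψ hd₁]
  rw [hP, mul_nonsing_inv_cancel_right P _ (isUnit_det_toMatrix'_vecPart hψ hd₁)]

theorem map_conj_toMatrix'_vecPart (hψ : ∀ p q, ψ (sdBra B₁ p q) = sdBra B₂ (ψ p) (ψ q))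
    (hd₁ : Submodule.span K {x | ∃ a ∈ B₁, ∃ y : Fin n → K, a *ᵥ y = x} = ⊤) :
    Submodule.map ((LinearMap.mulLeft K (LinearMap.toMatrix' (vecPart ψ))).comp
      (LinearMap.mulRight K (LinearMap.toMatrix' (vecPart ψ))⁻¹)) B₁ = B₂ := by
  ext b
  constructor
  · rintro ⟨a, ha, rfl⟩
    simp [← mul_assoc, ← fst_apply_eq_conj hψ hd₁ ⟨a, ha⟩]
  · intro hb
    obtain ⟨a, ha⟩ := exists_fst_apply_eq hψ hd₁ ⟨b, hb⟩
    refine ⟨a, a.2, ?_⟩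
    simp [← mul_assoc, ← fst_apply_eq_conj hψ hd₁, ha]

theorem exists_conj_of_equiv (hψ : ∀ p q, ψ (sdBra B₁ p q) = sdBra B₂ (ψ p) (ψ q))
    (h₁ : ∀ a ∈ B₁, ∀ b ∈ B₁, a * b = b * a)
    (hd₁ : Submodule.span K {x | ∃ a ∈ B₁, ∃ y : Fin n → K, a *ᵥ y = x} = ⊤) :
    ∃ (P : Matrix (Fin n) (Fin n) K) (x₀ : Fin n → K), IsUnit P.det ∧
      Submodule.map ((LinearMap.mulLeft K P).comp (LinearMap.mulRight K P⁻¹)) B₁ = B₂ ∧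
      ∀ (a : B₁) (x : Fin n → K), (ψ (a, x)).1.val = P * a.val * P⁻¹ ∧
        (ψ (a, x)).2 = (P * a.val * P⁻¹) *ᵥ x₀ + P *ᵥ x := by
  obtain ⟨x₀, hx₀⟩ := exists_snd_apply_eq_fst_mulVec hψ h₁ hd₁
  refine ⟨_, x₀, isUnit_det_toMatrix'_vecPart hψ hd₁, map_conj_toMatrix'_vecPart hψ hd₁,
    fun a x => ?_⟩
  rw [apply_eq hψ hd₁, hx₀, ← fst_apply_eq_conj hψ hd₁, LinearMap.toMatrix'_mulVec]
  exact ⟨rfl, rfl⟩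

end Equiv

theorem exists_equiv_of_conj {P : Matrix (Fin n) (Fin n) K} (hP : IsUnit P.det)
    (hmap : Submodule.map ((LinearMap.mulLeft K P).comp (LinearMap.mulRight K P⁻¹)) B₁ = B₂) :
    ∃ ψ : (B₁ × (Fin n → K)) ≃ₗ[K] (B₂ × (Fin n → K)),
      ∀ p q, ψ (sdBra B₁ p q) = sdBra B₂ (ψ p) (ψ q) := by
  obtain ⟨u, rfl⟩ := (isUnit_iff_isUnit_det P).mpr hP
  let c := (MulSemiringAction.toAlgEquiv K (Matrix (Fin n) (Fin n) K)
    (ConjAct.toConjAct u)).toLinearEquiv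
  have hc : c.toLinearMap = (LinearMap.mulLeft K u.val).comp (LinearMap.mulRight K u.val⁻¹) :=
    LinearMap.ext fun m => by simp [c, ConjAct.units_smul_def, mul_assoc, coe_units_inv]
  refine ⟨(c.submoduleMap B₁ ≪≫ₗ LinearEquiv.ofEq _ _ (hc ▸ hmap)).prodCongr
    (toLinearEquiv' u u.invertible), prodCongr _ _ fun a x => ?_⟩
  change u.val *ᵥ (a.val *ᵥ x) = (c a) *ᵥ (u.val *ᵥ x)
  simp [c, ConjAct.units_smul_def, mulVec_mulVec, mul_assoc, nonsing_inv_mul _ hP]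

end sdBra

theorem stmt5_general {K : Type*} [Field K] {n : ℕ}
    (B₁ B₂ : Submodule K (Matrix (Fin n) (Fin n) K))
    (h₁ : ∀ a ∈ B₁, ∀ b ∈ B₁, a * b = b * a)
    (hd₁ : Submodule.span K
      {x : Fin n → K | ∃ a ∈ B₁, ∃ y : Fin n → K, Matrix.mulVec a y = x} = ⊤) :
    ((∃ ψ : (B₁ × (Fin n → K)) ≃ₗ[K] (B₂ × (Fin n → K)),
        ∀ p q, ψ (sdBra B₁ p q) = sdBra B₂ (ψ p) (ψ q)) ↔
      (∃ P : Matrix (Fin n) (Fin n) K, IsUnit P.det ∧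
        Submodule.map ((LinearMap.mulLeft K P).comp (LinearMap.mulRight K P⁻¹)) B₁
          = B₂)) ∧
    (∀ ψ : (B₁ × (Fin n → K)) ≃ₗ[K] (B₂ × (Fin n → K)),
      (∀ p q, ψ (sdBra B₁ p q) = sdBra B₂ (ψ p) (ψ q)) →
      ∃ (P : Matrix (Fin n) (Fin n) K) (x₀ : Fin n → K), IsUnit P.det ∧
        Submodule.map ((LinearMap.mulLeft K P).comp (LinearMap.mulRight K P⁻¹)) B₁
          = B₂ ∧
        ∀ (a : B₁) (x : Fin n → K),
          ((ψ (a, x)).1 : Matrix (Fin n) (Fin n) K)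
              = P * (a : Matrix (Fin n) (Fin n) K) * P⁻¹ ∧
          (ψ (a, x)).2
              = Matrix.mulVec (P * (a : Matrix (Fin n) (Fin n) K) * P⁻¹) x₀
                + Matrix.mulVec P x) := by
  refine ⟨⟨fun ⟨ψ, hψ⟩ => ?_, fun ⟨P, hP, hmap⟩ => sdBra.exists_equiv_of_conj hP hmap⟩,
    fun ψ hψ => sdBra.exists_conj_of_equiv hψ h₁ hd₁⟩
  obtain ⟨P, -, hP, hmap, -⟩ := sdBra.exists_conj_of_equiv hψ h₁ hd₁
  exact ⟨P, hP, hmap⟩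

/-- for abelian matrix subalgebras B₁, B₂ whose semidirect products
with Kⁿ have derived ideal Kⁿ, the Lie algebras B₁ ⋉ Kⁿ and B₂ ⋉ Kⁿ are
isomorphic iff B₁ and B₂ are conjugate; and every isomorphism has the stated
affine form. -/
theorem stmt5 {K : Type*} [Field K] [CharZero K] {n : ℕ}
    (B₁ B₂ : Submodule K (Matrix (Fin n) (Fin n) K))
    (h₁ : ∀ a ∈ B₁, ∀ b ∈ B₁, a * b = b * a)
    (h₂ : ∀ a ∈ B₂, ∀ b ∈ B₂, a * b = b * a)
    (hd₁ : Submodule.span K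
      {x : Fin n → K | ∃ a ∈ B₁, ∃ y : Fin n → K, Matrix.mulVec a y = x} = ⊤)
    (hd₂ : Submodule.span K
      {x : Fin n → K | ∃ a ∈ B₂, ∃ y : Fin n → K, Matrix.mulVec a y = x} = ⊤) :
    ((∃ ψ : (B₁ × (Fin n → K)) ≃ₗ[K] (B₂ × (Fin n → K)),
        ∀ p q, ψ (sdBra B₁ p q) = sdBra B₂ (ψ p) (ψ q)) ↔
      (∃ P : Matrix (Fin n) (Fin n) K, IsUnit P.det ∧
        Submodule.map ((LinearMap.mulLeft K P).comp (LinearMap.mulRight K P⁻¹)) B₁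
          = B₂)) ∧
    (∀ ψ : (B₁ × (Fin n → K)) ≃ₗ[K] (B₂ × (Fin n → K)),
      (∀ p q, ψ (sdBra B₁ p q) = sdBra B₂ (ψ p) (ψ q)) →
      ∃ (P : Matrix (Fin n) (Fin n) K) (x₀ : Fin n → K), IsUnit P.det ∧
        Submodule.map ((LinearMap.mulLeft K P).comp (LinearMap.mulRight K P⁻¹)) B₁
          = B₂ ∧
        ∀ (a : B₁) (x : Fin n → K),
          ((ψ (a, x)).1 : Matrix (Fin n) (Fin n) K)
              = P * (a : Matrix (Fin n) (Fin n) K) * P⁻¹ ∧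
          (ψ (a, x)).2
              = Matrix.mulVec (P * (a : Matrix (Fin n) (Fin n) K) * P⁻¹) x₀
                + Matrix.mulVec P x) :=
  stmt5_general B₁ B₂ h₁ hd₁
end

section
/- Let B be an abelian Lie subalgebra of gl(n,K), G = B ⋉ K^n the semidirect product Lie algebra, and suppose α ∈ G* vanishes on B and its restriction to K^n has an open orbit, i.e., there is a basis (a₁,…,a_n) of B such that (α∘a₁, …, α∘a_n) is a basis of (K^n)*. Then the Chevalley–Eilenberg coboundary ω = ∂α, defined by ω(u,v) = −α([u,v]), is a nondegenerate alternating bilinear form on G. In particular G is a Frobenius (exact symplectic) Lie algebra. -/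
open Matrix

/-! If `u = (A, x)` pairs to zero with everything, pairing with `(0, y)` gives `α ∘ A = 0`, and
pairing with `(aᵢ, 0)` gives `(α ∘ aᵢ) x = 0` for all `i`. The open-orbit hypothesis says that
`A ↦ α ∘ A` maps the basis `(aᵢ)` of `B` to a basis of the dual, so it is injective and `A = 0`;
and a vector killed by a basis of the dual is zero, so `x = 0`. -/

theorem Module.Basis.eq_zero_of_dual_apply_eq_zero {K V ι : Type*} [Field K] [AddCommGroup V]
    [Module K V] (b : Module.Basis ι K (Module.Dual K V)) {x : V} (hx : ∀ i, b i x = 0) :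
    x = 0 := by
  have hev : Module.Dual.eval K V x = 0 := b.ext hx
  exact (Module.forall_dual_apply_eq_zero_iff K x).mp fun φ => LinearMap.congr_fun hev φ

section ContragredientOrbit

variable {K : Type*} [Field K] {n : ℕ}

/-- Up to sign, the differential at `α` of the orbit map of the contragredient action of `B`. -/
def contragredientOrbitMap (α : Module.Dual K (Fin n → K))
    (B : Submodule K (Matrix (Fin n) (Fin n) K)) : B →ₗ[K] Module.Dual K (Fin n → K) :=
  LinearMap.llcomp K _ _ K α ∘ₗ Matrix.toLin'.toLinearMap ∘ₗ B.subtype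

@[simp]
theorem contragredientOrbitMap_apply (α : Module.Dual K (Fin n → K))
    (B : Submodule K (Matrix (Fin n) (Fin n) K)) (A : B) :
    contragredientOrbitMap α B A = α ∘ₗ mulVecLin (A : Matrix (Fin n) (Fin n) K) :=
  rfl

theorem contragredientOrbitMap_injective {α : Module.Dual K (Fin n → K)}
    {B : Submodule K (Matrix (Fin n) (Fin n) K)} (a : Module.Basis (Fin n) K B)
    (b : Module.Basis (Fin n) K (Module.Dual K (Fin n → K)))
    (hb : ∀ i, b i = α ∘ₗ mulVecLin (a i : Matrix (Fin n) (Fin n) K)) :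
    Function.Injective (contragredientOrbitMap α B) := by
  have hmap : contragredientOrbitMap α B ∘ a = b := funext fun i => (hb i).symm
  exact LinearMap.injective_of_linearIndependent a.span_eq (hmap ▸ b.linearIndependent)

end ContragredientOrbit

theorem stmt7_general {K : Type*} [Field K] {n : ℕ}
    (B : Submodule K (Matrix (Fin n) (Fin n) K))
    (α : (Fin n → K) →ₗ[K] K)
    (a : Module.Basis (Fin n) K B)
    (hb : ∃ b : Module.Basis (Fin n) K (Module.Dual K (Fin n → K)),
      ∀ i : Fin n, b i = α ∘ₗ Matrix.mulVecLin ((a i : Matrix (Fin n) (Fin n) K)))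
    -- `ω u v = −α([u,v])` on `G = B × Kⁿ`
    (ω : (B × (Fin n → K)) → (B × (Fin n → K)) → K)
    (hω : ∀ u v : B × (Fin n → K),
      ω u v = -α (Matrix.mulVec (u.1 : Matrix (Fin n) (Fin n) K) v.2
                  - Matrix.mulVec (v.1 : Matrix (Fin n) (Fin n) K) u.2)) :
    (∀ u : B × (Fin n → K), ω u u = 0) ∧
    (∀ u : B × (Fin n → K), (∀ v, ω u v = 0) → u = 0) := by
  obtain ⟨b, hb⟩ := hb
  refine ⟨fun u => by simp [hω], ?_⟩
  rintro ⟨A, x⟩ hu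
  have hA : contragredientOrbitMap α B A = 0 :=
    LinearMap.ext fun y => by simpa [hω] using hu (0, y)
  have hx : ∀ i, b i x = 0 := fun i => by simpa [hω, hb] using hu (a i, 0)
  have hA0 : A = 0 := contragredientOrbitMap_injective a b hb (hA.trans (map_zero _).symm)
  exact Prod.ext hA0 (b.eq_zero_of_dual_apply_eq_zero hx)

/-- on `G = B ⋉ Kⁿ`, if `α` vanishes on `B` and its restriction to
`Kⁿ` has an open contragredient orbit (the forms `α ∘ aᵢ` form a basis of the
dual for some basis `aᵢ` of `B`), then `∂α(u,v) = −α([u,v])` is a nondegenerate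
alternating form, i.e. `G` is Frobenius. -/
theorem stmt7 {K : Type*} [Field K] {n : ℕ}
    (B : Submodule K (Matrix (Fin n) (Fin n) K))
    (hcomm : ∀ a ∈ B, ∀ b ∈ B, a * b = b * a)
    (α : (Fin n → K) →ₗ[K] K)
    (a : Module.Basis (Fin n) K B)
    (hb : ∃ b : Module.Basis (Fin n) K (Module.Dual K (Fin n → K)),
      ∀ i : Fin n, b i = α ∘ₗ Matrix.mulVecLin ((a i : Matrix (Fin n) (Fin n) K)))
    -- `ω u v = −α([u,v])` on `G = B × Kⁿ`
    (ω : (B × (Fin n → K)) → (B × (Fin n → K)) → K)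
    (hω : ∀ u v : B × (Fin n → K),
      ω u v = -α (Matrix.mulVec (u.1 : Matrix (Fin n) (Fin n) K) v.2
                  - Matrix.mulVec (v.1 : Matrix (Fin n) (Fin n) K) u.2)) :
    (∀ u : B × (Fin n → K), ω u u = 0) ∧
    (∀ u : B × (Fin n → K), (∀ v, ω u v = 0) → u = 0) :=
  stmt7_general B α a hb ω hω
end

section
/- Let G be a finite-dimensional 2-step solvable Frobenius Lie algebra over a field K of characteristic zero, i.e., [G,G] is abelian and there exists η ∈ G* with ∂η nondegenerate. Then dim G = 2n is even, the derived ideal [G,G] has dimension exactly n, and any complement B of [G,G] with [B,B]=0 satisfies that the adjoint representation of B on [G,G] is faithful and the contragredient action of B on [G,G]* has an open orbit. -/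
/-!
Write `W = [G, G]` and `ω(u, v) = η [u, v]`, a nondegenerate alternating form. By Jacobi and
the abelianness of `W`, every `u` that is `ω`-orthogonal to `W` centralizes `W`, and any two such
elements commute; hence `W` is a Lagrangian subspace, `W^⊥ = W`, which gives `dim G = 2 dim W`.
Nondegeneracy makes `u ↦ ω(u, ·)|_W` surjective onto `W*`, and decomposing `u = a + w` along
`G = B ⊕ W` shows `ω(u, ·)|_W = η ∘ ad(a)|_W`: this is the open orbit. Faithfulness holds since an
element of `B` centralizing `W` is central.
-/

open Module

namespace LinearMap.BilinForm

variable {K V : Type*} [Field K] [AddCommGroup V] [Module K V] [FiniteDimensional K V]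
  {B : LinearMap.BilinForm K V}

theorem finrank_eq_two_mul_of_orthogonal_eq_self (hB : B.Nondegenerate) {W : Submodule K V}
    (hW : B.orthogonal W = W) : finrank K V = 2 * finrank K W := by
  have h := finrank_orthogonal hB W
  rw [hW] at h
  have := W.finrank_le
  omega

theorem exists_forall_apply_eq (hB : B.Nondegenerate) (W : Submodule K V) (f : Dual K W) :
    ∃ u : V, ∀ x : W, B u x = f x := by
  obtain ⟨φ, rfl⟩ := dualMap_surjective_of_injective W.injective_subtype f
  exact ⟨(B.toDual hB).symm φ, fun x => apply_toDual_symm_apply φ x⟩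

end LinearMap.BilinForm

namespace LieAlgebra

variable {K G : Type*} [Field K] [LieRing G] [LieAlgebra K G]

theorem lie_eq_zero_of_mem_derived (h2 : ∀ u v u' v' : G, ⁅⁅u, v⁆, ⁅u', v'⁆⁆ = 0) {x y : G}
    (hx : x ∈ ⁅(⊤ : LieIdeal K G), (⊤ : LieIdeal K G)⁆)
    (hy : y ∈ ⁅(⊤ : LieIdeal K G), (⊤ : LieIdeal K G)⁆) : ⁅x, y⁆ = 0 := by
  rw [← LieSubmodule.mem_toSubmodule, LieSubmodule.lieIdeal_oper_eq_linear_span'] at hx hy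
  induction hx, hy using Submodule.span_induction₂ with
  | mem_mem _ _ hx hy =>
    obtain ⟨u, -, v, -, rfl⟩ := hx
    obtain ⟨u', -, v', -, rfl⟩ := hy
    exact h2 u v u' v'
  | zero_left => exact zero_lie _
  | zero_right => exact lie_zero _
  | add_left _ _ _ _ _ _ h h' => rw [add_lie, h, h', add_zero]
  | add_right _ _ _ _ _ _ h h' => rw [lie_add, h, h', add_zero]
  | smul_left _ _ _ _ _ h => rw [smul_lie, h, smul_zero]
  | smul_right _ _ _ _ _ h => rw [lie_smul, h, smul_zero]

/-- The paper's `∂η` is `-kirillovForm η`; the sign plays no role. -/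
def kirillovForm (η : Dual K G) : LinearMap.BilinForm K G :=
  (LieModule.toEnd K G G : G →ₗ[K] Module.End K G).compr₂ η

@[simp]
theorem kirillovForm_apply (η : Dual K G) (u v : G) : kirillovForm η u v = η ⁅u, v⁆ := rfl

theorem kirillovForm_isAlt (η : Dual K G) : (kirillovForm η).IsAlt := fun u => by simp

theorem kirillovForm_nondegenerate {η : Dual K G}
    (hη : ∀ u : G, (∀ v : G, η ⁅u, v⁆ = 0) → u = 0) : (kirillovForm η).Nondegenerate :=
  (kirillovForm_isAlt η).isRefl.nondegenerate_iff_separatingLeft.mpr hη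

section AbelianIdeal

variable {η : Dual K G} {W : LieIdeal K G}

theorem lie_eq_zero_of_mem_orthogonal (hη : ∀ u : G, (∀ v : G, η ⁅u, v⁆ = 0) → u = 0)
    (hWab : ∀ x ∈ W, ∀ y ∈ W, ⁅x, y⁆ = 0) (hWder : ∀ u v : G, ⁅u, v⁆ ∈ W) {u w : G}
    (hu : u ∈ (kirillovForm η).orthogonal W.toSubmodule) (hw : w ∈ W) : ⁅u, w⁆ = 0 := by
  refine hη _ fun v => ?_
  rw [lie_lie, hWab w hw _ (hWder u v), sub_zero, ← lie_skew, map_neg, neg_eq_zero]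
  exact hu _ (hWder w v)

theorem lie_eq_zero_of_mem_orthogonal_of_mem_orthogonal
    (hη : ∀ u : G, (∀ v : G, η ⁅u, v⁆ = 0) → u = 0)
    (hWab : ∀ x ∈ W, ∀ y ∈ W, ⁅x, y⁆ = 0) (hWder : ∀ u v : G, ⁅u, v⁆ ∈ W) {u u' : G}
    (hu : u ∈ (kirillovForm η).orthogonal W.toSubmodule)
    (hu' : u' ∈ (kirillovForm η).orthogonal W.toSubmodule) :
    ⁅u, u'⁆ = 0 := by
  refine hη _ fun v => ?_
  rw [lie_lie, lie_eq_zero_of_mem_orthogonal hη hWab hWder hu (hWder u' v),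
    lie_eq_zero_of_mem_orthogonal hη hWab hWder hu' (hWder u v), sub_zero, map_zero]

theorem kirillovForm_orthogonal_eq_self [FiniteDimensional K G]
    (hη : ∀ u : G, (∀ v : G, η ⁅u, v⁆ = 0) → u = 0)
    (hWab : ∀ x ∈ W, ∀ y ∈ W, ⁅x, y⁆ = 0) (hWder : ∀ u v : G, ⁅u, v⁆ ∈ W) :
    (kirillovForm η).orthogonal W.toSubmodule = W := by
  set ω := kirillovForm η
  refine le_antisymm ?_ fun w hw w' hw' => by
    show η ⁅w', w⁆ = 0
    rw [hWab w' hw' w hw, map_zero]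
  calc ω.orthogonal W.toSubmodule ≤ ω.orthogonal (ω.orthogonal W.toSubmodule) :=
        fun u' hu' u hu => by
          show η ⁅u, u'⁆ = 0
          rw [lie_eq_zero_of_mem_orthogonal_of_mem_orthogonal hη hWab hWder hu hu', map_zero]
    _ = W.toSubmodule := ω.orthogonal_orthogonal (kirillovForm_nondegenerate hη)
        (kirillovForm_isAlt η).isRefl _

end AbelianIdeal

end LieAlgebra

open LieAlgebra in
theorem stmt8_general {K : Type*} [Field K]
    (G : Type*) [LieRing G] [LieAlgebra K G] [Module.Finite K G]
    (h2 : ∀ u v u' v' : G, ⁅⁅u, v⁆, ⁅u', v'⁆⁆ = 0)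
    (η : Module.Dual K G)
    (hη : ∀ u : G, (∀ v : G, η ⁅u, v⁆ = 0) → u = 0) :
    Module.finrank K G
      = 2 * Module.finrank K (⁅(⊤ : LieIdeal K G), (⊤ : LieIdeal K G)⁆ : LieIdeal K G) ∧
    ∀ B : Submodule K G,
      IsCompl B (⁅(⊤ : LieIdeal K G), (⊤ : LieIdeal K G)⁆ : LieIdeal K G).toSubmodule →
      (∀ a ∈ B, ∀ b ∈ B, ⁅a, b⁆ = 0) →
      ((∀ a ∈ B,
          (∀ x ∈ (⁅(⊤ : LieIdeal K G), (⊤ : LieIdeal K G)⁆ : LieIdeal K G), ⁅a, x⁆ = 0)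
          → a = 0) ∧
       ∃ α : Module.Dual K (⁅(⊤ : LieIdeal K G), (⊤ : LieIdeal K G)⁆ : LieIdeal K G),
         ∀ f : Module.Dual K (⁅(⊤ : LieIdeal K G), (⊤ : LieIdeal K G)⁆ : LieIdeal K G),
           ∃ a ∈ B, ∀ x : (⁅(⊤ : LieIdeal K G), (⊤ : LieIdeal K G)⁆ : LieIdeal K G),
             f x = -α ⟨⁅a, (x : G)⁆,
               (⁅(⊤ : LieIdeal K G), (⊤ : LieIdeal K G)⁆ : LieIdeal K G).lie_mem x.2⟩) := by
  set W : LieIdeal K G := ⁅(⊤ : LieIdeal K G), (⊤ : LieIdeal K G)⁆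
  have hWab : ∀ x ∈ W, ∀ y ∈ W, ⁅x, y⁆ = 0 := fun x hx y hy =>
    lie_eq_zero_of_mem_derived h2 hx hy
  have hWder : ∀ u v : G, ⁅u, v⁆ ∈ W := fun u v =>
    LieSubmodule.lie_mem_lie (LieSubmodule.mem_top u) (LieSubmodule.mem_top v)
  refine ⟨(kirillovForm η).finrank_eq_two_mul_of_orthogonal_eq_self
    (kirillovForm_nondegenerate hη) (kirillovForm_orthogonal_eq_self hη hWab hWder),
    fun B hBW hB => ⟨fun a ha haW => hη a fun v => ?_, η.comp W.toSubmodule.subtype, fun f => ?_⟩⟩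
  · obtain ⟨b, w, hb, hw, rfl⟩ := Submodule.codisjoint_iff_exists_add_eq.mp hBW.codisjoint v
    rw [lie_add, hB a ha b hb, haW w hw, add_zero, map_zero]
  · obtain ⟨u, hu⟩ := (kirillovForm η).exists_forall_apply_eq
      (kirillovForm_nondegenerate hη) W.toSubmodule (-f)
    obtain ⟨a, w, ha, hw, rfl⟩ := Submodule.codisjoint_iff_exists_add_eq.mp hBW.codisjoint u
    refine ⟨a, ha, fun x => ?_⟩
    have hx := hu x
    rw [kirillovForm_apply, add_lie, hWab w hw x x.2, add_zero] at hx
    show f x = -η ⁅a, (x : G)⁆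
    rw [hx, LinearMap.neg_apply, neg_neg]

/-- a 2-step solvable Frobenius Lie algebra has even dimension 2n,
its derived ideal has dimension n, and any abelian complement B of the derived
ideal acts faithfully on it with an open contragredient orbit. -/
theorem stmt8 {K : Type*} [Field K] [CharZero K]
    (G : Type*) [LieRing G] [LieAlgebra K G] [Module.Finite K G]
    (h2 : ∀ u v u' v' : G, ⁅⁅u, v⁆, ⁅u', v'⁆⁆ = 0)
    (η : Module.Dual K G)
    (hη : ∀ u : G, (∀ v : G, η ⁅u, v⁆ = 0) → u = 0) :
    Module.finrank K G
      = 2 * Module.finrank K (⁅(⊤ : LieIdeal K G), (⊤ : LieIdeal K G)⁆ : LieIdeal K G) ∧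
    ∀ B : Submodule K G,
      IsCompl B (⁅(⊤ : LieIdeal K G), (⊤ : LieIdeal K G)⁆ : LieIdeal K G).toSubmodule →
      (∀ a ∈ B, ∀ b ∈ B, ⁅a, b⁆ = 0) →
      ((∀ a ∈ B,
          (∀ x ∈ (⁅(⊤ : LieIdeal K G), (⊤ : LieIdeal K G)⁆ : LieIdeal K G), ⁅a, x⁆ = 0)
          → a = 0) ∧
       ∃ α : Module.Dual K (⁅(⊤ : LieIdeal K G), (⊤ : LieIdeal K G)⁆ : LieIdeal K G),
         ∀ f : Module.Dual K (⁅(⊤ : LieIdeal K G), (⊤ : LieIdeal K G)⁆ : LieIdeal K G),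
           ∃ a ∈ B, ∀ x : (⁅(⊤ : LieIdeal K G), (⊤ : LieIdeal K G)⁆ : LieIdeal K G),
             f x = -α ⟨⁅a, (x : G)⁆,
               (⁅(⊤ : LieIdeal K G), (⊤ : LieIdeal K G)⁆ : LieIdeal K G).lie_mem x.2⟩) :=
  stmt8_general G h2 η hη
end

section
/- Let G = B ⋉ K^n be a 2-step solvable Frobenius Lie algebra where B is an n-dimensional space of pairwise commuting n×n matrices acting on K^n by multiplication, with Frobenius form ω = ∂α for α vanishing on B. Define the left symmetric product ⋆ on G by ω(u⋆v, w) = −ω(v,[u,w]). Then for all a,b ∈ B and x,y ∈ K^n: a⋆b = −ab (the negative of the matrix product, which therefore lies in B), a⋆x = 0, x⋆y = 0, and x⋆a = −ax. Moreover the principal element v₀ (the unique element with ω(v₀,·) = α) equals −I_n. -/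
open Matrix

/-- on a 2-step solvable Frobenius Lie algebra `G = B ⋉ Kⁿ` (B an
n-dimensional commuting space of matrices, ω = ∂α with α vanishing on B), the
left symmetric product `⋆` defined by `ω(u⋆v,w) = −ω(v,[u,w])` satisfies
`a⋆b = −ab ∈ B`, `a⋆x = 0`, `x⋆y = 0`, `x⋆a = −ax`, and the principal element
is `−Iₙ`. -/
theorem stmt9 {K : Type*} [Field K] {n : ℕ}
    (B : Submodule K (Matrix (Fin n) (Fin n) K))
    (hdim : Module.finrank K B = n)
    (hcomm : ∀ a ∈ B, ∀ b ∈ B, a * b = b * a)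
    (α : (Fin n → K) →ₗ[K] K)
    (ω : (B × (Fin n → K)) → (B × (Fin n → K)) → K)
    (hω : ∀ u v : B × (Fin n → K),
      ω u v = -α (Matrix.mulVec (u.1 : Matrix (Fin n) (Fin n) K) v.2
                  - Matrix.mulVec (v.1 : Matrix (Fin n) (Fin n) K) u.2))
    (hnd : ∀ u : B × (Fin n → K), (∀ v, ω u v = 0) → u = 0)
    (star : (B × (Fin n → K)) → (B × (Fin n → K)) → (B × (Fin n → K)))
    (hstar : ∀ u v w : B × (Fin n → K),
      ω (star u v) w
        = -ω v (0, Matrix.mulVec (u.1 : Matrix (Fin n) (Fin n) K) w.2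
                    - Matrix.mulVec (w.1 : Matrix (Fin n) (Fin n) K) u.2)) :
    (∀ a b : B,
      (((star (a, 0) (b, 0)).1 : Matrix (Fin n) (Fin n) K)
          = -((a : Matrix (Fin n) (Fin n) K) * (b : Matrix (Fin n) (Fin n) K)) ∧
        (star (a, 0) (b, 0)).2 = 0)) ∧
    (∀ (a : B) (x : Fin n → K), star (a, 0) (0, x) = 0) ∧
    (∀ x y : Fin n → K, star ((0 : B), x) (0, y) = 0) ∧
    (∀ (a : B) (x : Fin n → K),
      star ((0 : B), x) (a, 0)
        = (0, -Matrix.mulVec (a : Matrix (Fin n) (Fin n) K) x)) ∧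
    (∀ v₀ : B × (Fin n → K), (∀ u, ω v₀ u = α u.2) →
      ((v₀.1 : Matrix (Fin n) (Fin n) K) = -(1 : Matrix (Fin n) (Fin n) K) ∧
        v₀.2 = 0)) := by
  classical
  -- uniqueness from nondegeneracy
  have hsub : ∀ u u' : B × (Fin n → K), (∀ w, ω u w = ω u' w) → u = u' := by
    intro u u' h
    have h0 : ∀ w, ω (u - u') w = 0 := by
      intro w
      have h1 := h w
      rw [hω u w, hω u' w] at h1
      rw [hω]
      simp only [Prod.fst_sub, Prod.snd_sub, AddSubgroupClass.coe_sub, sub_mulVec,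
        mulVec_sub, map_sub] at h1 ⊢
      linear_combination h1
    exact sub_eq_zero.mp (hnd _ h0)
  -- z = 0 if α(c z) = 0 for all c ∈ B
  have hz : ∀ z : Fin n → K,
      (∀ c : B, α ((c : Matrix (Fin n) (Fin n) K) *ᵥ z) = 0) → z = 0 := by
    intro z h
    have h0 : ∀ v, ω ((0 : B), z) v = 0 := by
      intro v
      rw [hω]
      simp [h v.1]
    exact congrArg Prod.snd (hnd _ h0)
  -- a matrix commuting with B on which α∘M vanishes is zero
  have hM : ∀ M : Matrix (Fin n) (Fin n) K, (∀ c ∈ B, c * M = M * c) →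
      (∀ x, α (M *ᵥ x) = 0) → M = 0 := by
    intro M hc h0
    have hmv : ∀ x, M *ᵥ x = 0 := by
      intro x
      apply hz
      intro c
      have hcm : (c : Matrix (Fin n) (Fin n) K) *ᵥ (M *ᵥ x)
          = M *ᵥ ((c : Matrix (Fin n) (Fin n) K) *ᵥ x) := by
        rw [mulVec_mulVec, mulVec_mulVec, hc c c.2]
      rw [hcm, h0]
    ext i j
    have := congrFun (hmv (Pi.single j 1)) i
    simpa [mulVec_single] using this
  refine ⟨?_, ?_, ?_, ?_, ?_⟩
  · intro a b
    constructor
    · -- first component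
      have key : ∀ x : Fin n → K,
          α ((((star ((a : B), (0 : Fin n → K)) (b, 0)).1 : Matrix (Fin n) (Fin n) K)
              + (b : Matrix (Fin n) (Fin n) K) * (a : Matrix (Fin n) (Fin n) K)) *ᵥ x)
            = 0 := by
        intro x
        have h1 := hstar (a, 0) (b, 0) (0, x)
        rw [hω, hω] at h1
        simp only [mulVec_mulVec, ZeroMemClass.coe_zero, zero_mulVec, mulVec_zero,
          sub_zero, zero_sub, map_neg, neg_neg, add_mulVec, map_add] at h1 ⊢
        linear_combination -h1
      have hcomm' : ∀ c ∈ B,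
          c * (((star ((a : B), (0 : Fin n → K)) (b, 0)).1 : Matrix (Fin n) (Fin n) K)
              + (b : Matrix (Fin n) (Fin n) K) * (a : Matrix (Fin n) (Fin n) K))
          = (((star ((a : B), (0 : Fin n → K)) (b, 0)).1 : Matrix (Fin n) (Fin n) K)
              + (b : Matrix (Fin n) (Fin n) K) * (a : Matrix (Fin n) (Fin n) K)) * c := by
        intro c hcB
        have h1 := hcomm c hcB _ (star ((a : B), (0 : Fin n → K)) (b, 0)).1.2
        have h2 := hcomm c hcB b b.2
        have h3 := hcomm c hcB a a.2
        rw [mul_add, add_mul, h1, ← mul_assoc, h2, mul_assoc, h3, mul_assoc]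
      have hMz := hM _ hcomm' key
      have hba : (b : Matrix (Fin n) (Fin n) K) * a = (a : Matrix (Fin n) (Fin n) K) * b :=
        hcomm b b.2 a a.2
      rw [hba] at hMz
      linear_combination (norm := noncomm_ring) hMz
    · -- second component
      apply hz
      intro c
      have h1 := hstar (a, 0) (b, 0) (c, 0)
      rw [hω, hω] at h1
      simp only [ZeroMemClass.coe_zero, zero_mulVec, mulVec_zero, sub_zero, zero_sub,
        sub_self, map_zero, map_neg, neg_neg, neg_zero] at h1
      linear_combination h1
  · intro a x
    apply hsub
    intro w
    rw [hstar, hω, hω]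
    simp
  · intro x y
    apply hsub
    intro w
    rw [hstar, hω, hω]
    simp
  · intro a x
    apply hsub
    intro w
    rw [hstar, hω, hω]
    have hca : (a : Matrix (Fin n) (Fin n) K) * w.1 = (w.1 : Matrix (Fin n) (Fin n) K) * a :=
      hcomm a a.2 w.1 w.1.2
    simp only [ZeroMemClass.coe_zero, zero_mulVec, mulVec_zero, zero_sub, sub_zero,
      mulVec_neg, mulVec_mulVec, map_neg, neg_neg, sub_neg_eq_add, zero_add, map_sub,
      hca]
  · intro v₀ h
    have hq : v₀.2 = 0 := by
      apply hz
      intro c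
      have h1 := h (c, 0)
      rw [hω] at h1
      simpa using h1
    refine ⟨?_, hq⟩
    have key : ∀ x, α (((v₀.1 : Matrix (Fin n) (Fin n) K) + 1) *ᵥ x) = 0 := by
      intro x
      have h1 := h (0, x)
      rw [hω] at h1
      simp only [ZeroMemClass.coe_zero, zero_mulVec, mulVec_zero, sub_zero,
        add_mulVec, one_mulVec, map_add] at h1 ⊢
      linear_combination -h1
    have hcomm' : ∀ c ∈ B, c * ((v₀.1 : Matrix (Fin n) (Fin n) K) + 1)
        = ((v₀.1 : Matrix (Fin n) (Fin n) K) + 1) * c := by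
      intro c hcB
      rw [mul_add, add_mul, hcomm c hcB v₀.1 v₀.1.2, mul_one, one_mul]
    have hMz := hM _ hcomm' key
    linear_combination (norm := noncomm_ring) hMz
end

section
/- Let M be a 2×2 real matrix with non-real complex conjugate eigenvalues λ = λ_R − iλ_I and λ̄ (λ_I ≠ 0). Then the 4-dimensional Lie algebra G_M = ℝ[M] ⋉ ℝ² is isomorphic to aff(ℂ) regarded as a real Lie algebra, i.e., the Lie algebra with basis (X₁,X₂,X₃,X₄) and nonzero brackets [X₁,X₃]=X₃, [X₁,X₄]=X₄, [X₂,X₃]=X₄, [X₂,X₄]=−X₃. -/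
/-!
With `J = λ_I⁻¹ (M - λ_R)`, Cayley–Hamilton gives `J² = -1`, so `ℝ[M] = span(1, J)` is a copy
of `ℂ` acting on `ℝ² = span(e, J e)` by complex multiplication. In the basis
`(1, 0), (J, 0), (0, e), (0, J e)` the brackets of `ℝ[M] ⋉ ℝ²` are exactly those of `aff(ℂ)`.
-/

open Matrix Polynomial

/-- Bracket of `B ⋉ ℝ²` for a subspace `B` of 2×2 matrices. -/
def bra2 (B : Submodule ℝ (Matrix (Fin 2) (Fin 2) ℝ)) :
    (B × (Fin 2 → ℝ)) → (B × (Fin 2 → ℝ)) → (B × (Fin 2 → ℝ)) :=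
  fun p q =>
    (0, Matrix.mulVec (p.1 : Matrix (Fin 2) (Fin 2) ℝ) q.2
        - Matrix.mulVec (q.1 : Matrix (Fin 2) (Fin 2) ℝ) p.2)

open Module

section ComplexStructure

variable {K V : Type*} [Field K] [LinearOrder K] [IsStrictOrderedRing K]
  [AddCommGroup V] [Module K V]

theorem linearIndependent_pair_apply_of_apply_apply_eq_neg (f : V →ₗ[K] V) {v : V}
    (hv : v ≠ 0) (hf : f (f v) = -v) : LinearIndependent K ![v, f v] := by
  rw [LinearIndependent.pair_iff]
  intro s t hst
  have hrot : s • f v - t • v = 0 := by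
    simpa [hf, sub_eq_add_neg, add_comm] using congrArg f hst
  have hnorm : (s ^ 2 + t ^ 2) • v = 0 := by
    linear_combination (norm := module) s • hst - t • hrot
  have hsum : s ^ 2 + t ^ 2 = 0 := (smul_eq_zero.mp hnorm).resolve_right hv
  constructor <;> nlinarith [sq_nonneg s, sq_nonneg t]

theorem exists_basis_fin_two_of_apply_apply_eq_neg [FiniteDimensional K V]
    (hV : finrank K V ≤ 2) (f : V →ₗ[K] V) {v : V} (hv : v ≠ 0) (hf : f (f v) = -v) :
    ∃ b : Basis (Fin 2) K V, b 0 = v ∧ b 1 = f v := by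
  have hli := linearIndependent_pair_apply_of_apply_apply_eq_neg f hv hf
  have hcard : Fintype.card (Fin 2) = finrank K V :=
    le_antisymm hli.fintype_card_le_finrank (by simpa using hV)
  exact ⟨basisOfLinearIndependentOfCardEqFinrank hli hcard, by simp, by simp⟩

end ComplexStructure

theorem exists_basis_fin_four_prod {K U V : Type*} [Semiring K] [AddCommMonoid U] [Module K U]
    [AddCommMonoid V] [Module K V] (bU : Basis (Fin 2) K U) (bV : Basis (Fin 2) K V) :
    ∃ b : Basis (Fin 4) K (U × V),
      b 0 = (bU 0, 0) ∧ b 1 = (bU 1, 0) ∧ b 2 = (0, bV 0) ∧ b 3 = (0, bV 1) := by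
  refine ⟨(bU.prod bV).reindex finSumFinEquiv, ?_, ?_, ?_, ?_⟩ <;>
    simp [Basis.prod_apply, finSumFinEquiv] <;> rfl

theorem Matrix.mul_self_eq_neg_one_of_charpoly_eq {K n : Type*} [Field K] [Fintype n]
    [DecidableEq n] (M : Matrix n n K) {a b : K} (hb : b ≠ 0)
    (h : M.charpoly = (X - C a) ^ 2 + C (b ^ 2)) :
    (b⁻¹ • (M - a • 1)) * (b⁻¹ • (M - a • 1)) = -1 := by
  have hCH := M.aeval_self_charpoly
  rw [h] at hCH
  simp only [map_add, map_sub, aeval_X, aeval_C, Algebra.algebraMap_eq_smul_one, sq,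
    _root_.map_mul, smul_mul_smul_comm, mul_one] at hCH
  have hb2 : b⁻¹ * b⁻¹ * (b * b) = 1 := by field_simp
  rw [smul_mul_smul_comm, eq_neg_of_add_eq_zero_left hCH, smul_neg, smul_smul, hb2, one_smul]

theorem Matrix.finrank_adjoin_le_card {K n : Type*} [Field K] [Fintype n] [DecidableEq n]
    (M : Matrix n n K) :
    finrank K (Subalgebra.toSubmodule (Algebra.adjoin K {M})) ≤ Fintype.card n := by
  rw [← Submodule.span_range_natDegree_eq_adjoin M.charpoly_monic M.aeval_self_charpoly,
    M.charpoly_natDegree_eq_dim]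
  exact (finrank_span_finset_le_card _).trans
    (by convert Finset.card_image_le.trans_eq (Finset.card_range _))

section Bracket

variable {B : Submodule ℝ (Matrix (Fin 2) (Fin 2) ℝ)}

theorem bra2_inl_inl (x y : B) : bra2 B (x, 0) (y, 0) = 0 := by
  simp [bra2]

theorem bra2_inr_inr (v w : Fin 2 → ℝ) : bra2 B (0, v) (0, w) = 0 := by
  simp [bra2]

theorem bra2_inl_inr (x : B) (v : Fin 2 → ℝ) :
    bra2 B (x, 0) (0, v) = (0, (x : Matrix (Fin 2) (Fin 2) ℝ) *ᵥ v) := by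
  simp [bra2]

end Bracket

/-- for a 2×2 real matrix with non-real conjugate eigenvalues
λ_R ± iλ_I (λ_I ≠ 0), the Lie algebra G_M = ℝ[M] ⋉ ℝ² is isomorphic to aff(ℂ):
it admits a basis X₁,…,X₄ with the aff(ℂ) bracket relations. -/
theorem stmt14 (M : Matrix (Fin 2) (Fin 2) ℝ) (lamR lamI : ℝ) (hI : lamI ≠ 0)
    (hchar : M.charpoly = (X - C lamR) ^ 2 + C (lamI ^ 2)) :
    ∃ b : Module.Basis (Fin 4) ℝ
      (((Algebra.adjoin ℝ ({M} : Set (Matrix (Fin 2) (Fin 2) ℝ))).toSubmodule)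
        × (Fin 2 → ℝ)),
      bra2 _ (b 0) (b 1) = 0 ∧
      bra2 _ (b 2) (b 3) = 0 ∧
      bra2 _ (b 0) (b 2) = b 2 ∧
      bra2 _ (b 0) (b 3) = b 3 ∧
      bra2 _ (b 1) (b 2) = b 3 ∧
      bra2 _ (b 1) (b 3) = -(b 2) := by
  set B := (Algebra.adjoin ℝ ({M} : Set (Matrix (Fin 2) (Fin 2) ℝ))).toSubmodule
  set J := lamI⁻¹ • (M - lamR • 1)
  have hJJ : J * J = -1 := M.mul_self_eq_neg_one_of_charpoly_eq hI hchar
  have hJ : J ∈ B := Subalgebra.smul_mem _ (Subalgebra.sub_mem _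
    (Algebra.self_mem_adjoin_singleton ℝ M) (Subalgebra.smul_mem _ (Subalgebra.one_mem _) _)) _
  let mulJ : B →ₗ[ℝ] B := (LinearMap.mulLeft ℝ J).restrict fun _ hx => Subalgebra.mul_mem _ hJ hx
  have hmulJ : mulJ ⟨1, Subalgebra.one_mem _⟩ = ⟨J, hJ⟩ := Subtype.ext (mul_one J)
  obtain ⟨bB, hbB0, hbB1⟩ := exists_basis_fin_two_of_apply_apply_eq_neg
    (M.finrank_adjoin_le_card.trans_eq (Fintype.card_fin 2)) mulJ
    (fun h => one_ne_zero (congrArg Subtype.val h)) (by rw [hmulJ]; exact Subtype.ext hJJ)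
  rw [hmulJ] at hbB1
  obtain ⟨bV, hbV0, hbV1⟩ := exists_basis_fin_two_of_apply_apply_eq_neg (by simp) (toLin' J)
    (Pi.single_ne_zero_iff.mpr one_ne_zero : (Pi.single 0 1 : Fin 2 → ℝ) ≠ 0)
    (by rw [toLin'_apply, toLin'_apply, mulVec_mulVec, hJJ, neg_mulVec, one_mulVec])
  obtain ⟨b, hb0, hb1, hb2, hb3⟩ := exists_basis_fin_four_prod bB bV
  refine ⟨b, ?_, ?_, ?_, ?_, ?_, ?_⟩ <;>
    simp only [hb0, hb1, hb2, hb3, hbB0, hbB1, hbV0, hbV1, bra2_inl_inl, bra2_inr_inr,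
      bra2_inl_inr, toLin'_apply, one_mulVec, one_mul, mulVec_mulVec, hJJ, neg_mulVec,
      Prod.neg_mk, neg_zero]
end

section
/- For n ≥ 2, let B_n = ℝI_n ⊕ span(E_{1,n}, E_{2,n}, …, E_{n−1,n}) ⊆ M(n,ℝ). Then B_n is an n-dimensional maximal abelian subalgebra of gl(n,ℝ): any matrix b commuting with I_n and with every E_{i,n} (1 ≤ i ≤ n−1) belongs to B_n. Moreover, for n ≥ 3, for every linear form α on ℝ^n the orbit {α∘a : a ∈ B_n} is contained in span(α, ẽ_n*) and hence has dimension at most 2; in particular B_n has no open orbit on (ℝ^n)* when n ≥ 3. -/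
/-!
The commutant of the matrix units `E_{i,l}` (`i ≠ l`) is forced by comparing the entries in
column `l` of `b * E_{i,l}` and `E_{i,l} * b`: column `i` of `b` is `b_{l,l} e_i`. Hence `b` is a
scalar plus a matrix supported in column `l`. The generators `1` and `E_{i,l}` commute pairwise
because `E_{i,l} E_{j,l} = 0` for `j ≠ l`. Since `α ∘ E_{i,l} = α(e_i) ẽ_l*`, every orbit map
`a ↦ α ∘ a` sends `B` into `span(α, ẽ_l*)`, of dimension at most `2 < n`.
-/

open Matrix

lemma commute_of_mem_span {R A : Type*} [CommSemiring R] [Semiring A] [Algebra R A]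
    {s : Set A} (hs : ∀ a ∈ s, ∀ b ∈ s, Commute a b) {a b : A}
    (ha : a ∈ Submodule.span R s) (hb : b ∈ Submodule.span R s) : Commute a b :=
  Algebra.commute_of_mem_adjoin_of_forall_mem_commute (Algebra.span_le_adjoin R s hb)
    fun c hc => (Algebra.commute_of_mem_adjoin_of_forall_mem_commute
      (Algebra.span_le_adjoin R s ha) fun d hd => hs c hc d hd).symm

lemma Submodule.ne_top_of_le_span_pair {K V : Type*} [Field K] [AddCommGroup V] [Module K V]
    [FiniteDimensional K V] (hV : 2 < Module.finrank K V) {W : Submodule K V} {x y : V}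
    (hW : W ≤ span K {x, y}) : W ≠ ⊤ := by
  classical
  rintro rfl
  have hpair : Module.finrank K (span K {x, y}) ≤ 2 := by
    have := finrank_span_finset_le_card (R := K) ({x, y} : Finset V)
    rw [Finset.coe_pair] at this
    exact this.trans Finset.card_le_two
  have := Submodule.finrank_mono hW
  rw [finrank_top] at this
  omega

namespace ScalarColumn

variable {K ι : Type*} [Field K] [DecidableEq ι]

/-- `span K (gens l)` is `B_n = K • 1 ⊕ span {E_{i,n} | i ≠ n}`, with `l` in the role of `n`. -/
def gens (l : ι) : Set (Matrix ι ι K) :=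
  {1} ∪ {A | ∃ i : ι, i ≠ l ∧ A = single i l 1}

def family (l : ι) (k : ι) : Matrix ι ι K :=
  if k = l then 1 else single k l 1

lemma range_family (l : ι) : Set.range (family (K := K) l) = gens l := by
  ext A
  constructor
  · rintro ⟨k, rfl⟩
    by_cases hk : k = l
    · left; simp [family, hk]
    · right; exact ⟨k, hk, by simp [family, hk]⟩
  · rintro (hA | ⟨i, hi, rfl⟩)
    · exact ⟨l, by simp [family, Set.mem_singleton_iff.1 hA]⟩
    · exact ⟨i, by simp [family, hi]⟩

lemma family_apply_col (l k i : ι) : family (K := K) l k i l = (Pi.single k 1 : ι → K) i := by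
  by_cases hk : k = l
  · subst hk; simp [family, one_apply, Pi.single_apply, eq_comm]
  · simp [family, hk, single_apply, Pi.single_apply, eq_comm]

variable [Fintype ι]

lemma linearIndependent_family (l : ι) : LinearIndependent K (family (K := K) l) := by
  refine LinearIndependent.of_comp
    (LinearMap.proj l ∘ₗ (transposeLinearEquiv ι ι K K).toLinearMap) ?_
  convert (Pi.basisFun K ι).linearIndependent using 1
  ext k i
  simp only [Function.comp_apply, Pi.basisFun_apply]
  exact family_apply_col l k i

lemma finrank_span_gens (l : ι) : Module.finrank K (Submodule.span K (gens (K := K) l)) =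
    Fintype.card ι := by
  rw [← range_family, finrank_span_eq_card (linearIndependent_family l)]

lemma commute_of_mem_gens {l : ι} {a b : Matrix ι ι K} (ha : a ∈ gens l) (hb : b ∈ gens l) :
    Commute a b := by
  rcases ha with ha | ⟨i, hi, rfl⟩
  · rw [Set.mem_singleton_iff.1 ha]; exact Commute.one_left b
  rcases hb with hb | ⟨j, hj, rfl⟩
  · rw [Set.mem_singleton_iff.1 hb]; exact Commute.one_right _
  show single i l 1 * single j l 1 = single j l 1 * single i l 1
  rw [single_mul_single_of_ne (h := hj.symm), single_mul_single_of_ne (h := hi.symm)]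

lemma commute_of_mem_span_gens {l : ι} {a b : Matrix ι ι K}
    (ha : a ∈ Submodule.span K (gens l)) (hb : b ∈ Submodule.span K (gens l)) : Commute a b :=
  commute_of_mem_span (fun _ hx _ hy => commute_of_mem_gens hx hy) ha hb

lemma apply_eq_of_commute_single {b : Matrix ι ι K} {i l : ι} (h : Commute b (single i l 1))
    (k : ι) : b k i = if k = i then b l l else 0 := by
  have hkl := congrFun (congrFun h.eq k) l
  rw [mul_single_apply_same, mul_one] at hkl
  by_cases hk : k = i
  · subst hk
    rw [single_mul_apply_same, one_mul] at hkl
    rw [hkl, if_pos rfl]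
  · rw [single_mul_apply_of_ne (h := hk)] at hkl
    rw [hkl, if_neg hk]

lemma eq_smul_one_add_sum_single {b : Matrix ι ι K} {l : ι}
    (hb : ∀ j, j ≠ l → ∀ k, b k j = if k = j then b l l else 0) :
    b = b l l • 1 + ∑ i ∈ Finset.univ.erase l, b i l • single i l 1 := by
  ext k j
  simp only [Matrix.add_apply, Matrix.smul_apply, Matrix.sum_apply, single_apply, one_apply,
    smul_eq_mul, mul_ite, mul_one, mul_zero]
  by_cases hj : j = l
  · subst hj
    by_cases hk : k = j <;> simp [hk, eq_comm]
  · simp [hb j hj k, Ne.symm hj]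

lemma mem_span_gens_of_forall_commute {b : Matrix ι ι K} {l : ι}
    (hb : ∀ i, i ≠ l → Commute b (single i l 1)) : b ∈ Submodule.span K (gens l) := by
  rw [eq_smul_one_add_sum_single fun j hj => apply_eq_of_commute_single (hb j hj)]
  refine add_mem (Submodule.smul_mem _ _ (Submodule.subset_span (Or.inl rfl)))
    (Submodule.sum_mem _ fun i hi => Submodule.smul_mem _ _ (Submodule.subset_span ?_))
  exact Or.inr ⟨i, Finset.ne_of_mem_erase hi, rfl⟩

lemma comp_mulVecLin_single (α : (ι → K) →ₗ[K] K) (i l : ι) :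
    α ∘ₗ (single i l (1 : K)).mulVecLin = α (Pi.single i 1) • LinearMap.proj l := by
  refine LinearMap.ext fun v => ?_
  simp [single_mulVec_eq, mul_comm]

lemma comp_mulVecLin_mem_span_pair (α : (ι → K) →ₗ[K] K) {l : ι} {a : Matrix ι ι K}
    (ha : a ∈ Submodule.span K (gens l)) :
    α ∘ₗ a.mulVecLin ∈ Submodule.span K {α, LinearMap.proj l} := by
  let orbitMap : Matrix ι ι K →ₗ[K] (ι → K) →ₗ[K] K :=
    LinearMap.llcomp K _ _ _ α ∘ₗ Matrix.toLin'.toLinearMap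
  suffices Submodule.span K (gens l) ≤ (Submodule.span K {α, LinearMap.proj l}).comap orbitMap by
    simpa [orbitMap, Matrix.toLin'_apply', LinearMap.llcomp_apply'] using this ha
  rw [Submodule.span_le]
  rintro g (hg | ⟨i, -, rfl⟩)
  · rw [Set.mem_singleton_iff.1 hg]
    exact Submodule.subset_span (by simp [orbitMap, LinearMap.llcomp_apply'])
  · have := Submodule.smul_mem (Submodule.span K {α, LinearMap.proj l}) (α (Pi.single i 1))
      (Submodule.subset_span (Set.mem_insert_of_mem _ rfl))
    simpa [orbitMap, Matrix.toLin'_apply', LinearMap.llcomp_apply', comp_mulVecLin_single]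
      using this

end ScalarColumn

open ScalarColumn in
theorem stmt17_general {n : ℕ}
    (last : Fin n)
    (B : Submodule ℝ (Matrix (Fin n) (Fin n) ℝ))
    (hB : B = Submodule.span ℝ
      ({(1 : Matrix (Fin n) (Fin n) ℝ)}
        ∪ {A | ∃ i : Fin n, i ≠ last ∧ A = Matrix.single i last (1 : ℝ)})) :
    Module.finrank ℝ B = n ∧
    (∀ a ∈ B, ∀ b ∈ B, a * b = b * a) ∧
    (∀ b : Matrix (Fin n) (Fin n) ℝ,
      (∀ i : Fin n, i ≠ last →
        b * Matrix.single i last (1 : ℝ)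
          = Matrix.single i last (1 : ℝ) * b) → b ∈ B) ∧
    (3 ≤ n → ∀ α : (Fin n → ℝ) →ₗ[ℝ] ℝ,
      (∀ a ∈ B, α ∘ₗ Matrix.mulVecLin a ∈ Submodule.span ℝ
        ({α, LinearMap.proj last} : Set ((Fin n → ℝ) →ₗ[ℝ] ℝ))) ∧
      Submodule.span ℝ
        {f : (Fin n → ℝ) →ₗ[ℝ] ℝ | ∃ a ∈ B, f = α ∘ₗ Matrix.mulVecLin a} ≠ ⊤) := by
  change B = Submodule.span ℝ (gens last) at hB
  subst hB
  refine ⟨by simpa using finrank_span_gens (K := ℝ) last,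
    fun a ha b hb => (commute_of_mem_span_gens ha hb).eq,
    fun b hb => mem_span_gens_of_forall_commute hb,
    fun hn α => ⟨fun a ha => comp_mulVecLin_mem_span_pair α ha, ?_⟩⟩
  have hdim : 2 < Module.finrank ℝ ((Fin n → ℝ) →ₗ[ℝ] ℝ) := by
    rw [Module.finrank_linearMap_self, Module.finrank_fin_fun]; omega
  refine Submodule.ne_top_of_le_span_pair hdim (x := α) (y := LinearMap.proj last)
    (Submodule.span_le.2 ?_)
  rintro f ⟨a, ha, rfl⟩
  exact comp_mulVecLin_mem_span_pair α ha

/-- B_n = ℝIₙ ⊕ span(E_{1,n},…,E_{n−1,n}) is an n-dimensional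
maximal abelian subalgebra of gl(n,ℝ); for n ≥ 3, every contragredient orbit
{α∘a : a ∈ B_n} lies in span(α, ẽ_n*), so B_n has no open orbit on (ℝⁿ)*. -/
theorem stmt17 {n : ℕ} (hn : 2 ≤ n)
    (last : Fin n) (hlast : (last : ℕ) = n - 1)
    (B : Submodule ℝ (Matrix (Fin n) (Fin n) ℝ))
    (hB : B = Submodule.span ℝ
      ({(1 : Matrix (Fin n) (Fin n) ℝ)}
        ∪ {A | ∃ i : Fin n, i ≠ last ∧ A = Matrix.single i last (1 : ℝ)})) :
    Module.finrank ℝ B = n ∧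
    (∀ a ∈ B, ∀ b ∈ B, a * b = b * a) ∧
    (∀ b : Matrix (Fin n) (Fin n) ℝ,
      (∀ i : Fin n, i ≠ last →
        b * Matrix.single i last (1 : ℝ)
          = Matrix.single i last (1 : ℝ) * b) → b ∈ B) ∧
    (3 ≤ n → ∀ α : (Fin n → ℝ) →ₗ[ℝ] ℝ,
      (∀ a ∈ B, α ∘ₗ Matrix.mulVecLin a ∈ Submodule.span ℝ
        ({α, LinearMap.proj last} : Set ((Fin n → ℝ) →ₗ[ℝ] ℝ))) ∧
      Submodule.span ℝ
        {f : (Fin n → ℝ) →ₗ[ℝ] ℝ | ∃ a ∈ B, f = α ∘ₗ Matrix.mulVecLin a} ≠ ⊤) :=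
  stmt17_general last B hB
end

section
/- For even n ≥ 4, let M_s = −Σ_{j=0}^{n/2−1}(E_{2j+1,2j+2} − E_{2j+2,2j+1}) and M_n = Σ_{j=1}^{n−2} E_{j,j+2} in M(n,ℝ). Then M_s and M_n commute, M_s² = −I_n, M_n^{n/2} = 0, and M_s and M_n are respectively the semisimple and nilpotent parts of M_{0,1} := M_s + M_n; moreover both M_s and M_n are polynomials in M_{0,1}, so ℝ[M_{0,1}] = ℝ[M_s, M_n]. The matrix M_{0,1} is nonderogatory with characteristic polynomial (X²+1)^{n/2}. -/
open Matrix Polynomial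

/-!
`M_s² = -1` makes `M_s` semisimple, as `X² + 1` is squarefree over `ℝ`, and `M_n` shifts
coordinates by two places, so it is nilpotent of order exactly `n / 2`; the two commute because
`M_s` is block diagonal with equal `2 × 2` blocks and `M_n` moves whole blocks. By uniqueness of
the Jordan–Chevalley decomposition they are therefore the semisimple and nilpotent parts of
`M = M_s + M_n`, which are polynomials in `M`. Finally `M² + 1 = M_n (2 M_s + M_n)` with an
invertible second factor, so `(M² + 1)^k = 0` exactly when `M_n^k = 0`: the minimal polynomial of
`M` is `(X² + 1)^(n/2)`, of degree `n`, hence equal to the characteristic polynomial.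
-/

namespace Module.End

variable {K V : Type*} [Field K] [PerfectField K] [AddCommGroup V] [Module K V]
  [FiniteDimensional K V]

theorem mem_adjoin_of_isSemisimple_of_isNilpotent {s n : End K V} (hs : s.IsSemisimple)
    (hn : IsNilpotent n) (hc : Commute s n) :
    s ∈ Algebra.adjoin K {s + n} ∧ n ∈ Algebra.adjoin K {s + n} := by
  obtain ⟨n₀, hn₀, s₀, hs₀, hn₀_nil, hs₀_ss, h₀⟩ :=
    (s + n).exists_isNilpotent_isSemisimple
  have hc₀ : Commute n₀ s₀ := Algebra.commute_of_mem_adjoin_singleton_of_commute hs₀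
    (Algebra.commute_of_mem_adjoin_self hn₀).symm
  obtain ⟨rfl, rfl⟩ := isNilpotent_isSemisimple_unique hn hs hn₀_nil hs₀_ss hc.symm hc₀
    (by rw [add_comm, h₀])
  exact ⟨hs₀, hn₀⟩

end Module.End

theorem AlgEquiv.apply_mem_adjoin_singleton_iff {R A B : Type*} [CommSemiring R]
    [Semiring A] [Semiring B] [Algebra R A] [Algebra R B] (e : A ≃ₐ[R] B) {a x : A} :
    e x ∈ Algebra.adjoin R {e a} ↔ x ∈ Algebra.adjoin R {a} := by
  rw [show e a = e.toAlgHom a from rfl, ← AlgHom.map_adjoin_singleton, Subalgebra.mem_map]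
  exact ⟨fun ⟨y, hy, hyx⟩ => e.injective hyx ▸ hy, fun hx => ⟨x, hx, rfl⟩⟩

theorem Matrix.mem_adjoin_of_isSemisimple_of_isNilpotent {ι K : Type*} [Fintype ι]
    [DecidableEq ι] [Field K] [PerfectField K] {S N : Matrix ι ι K}
    (hS : Module.End.IsSemisimple S.mulVecLin) (hN : IsNilpotent N) (hc : Commute S N) :
    S ∈ Algebra.adjoin K {S + N} ∧ N ∈ Algebra.adjoin K {S + N} := by
  let e := Matrix.toLinAlgEquiv' (R := K) (n := ι)
  simp only [← AlgEquiv.apply_mem_adjoin_singleton_iff e, map_add]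
  exact Module.End.mem_adjoin_of_isSemisimple_of_isNilpotent hS (hN.map e) (hc.map e)

theorem Algebra.adjoin_singleton_add_eq_adjoin_pair {R A : Type*} [CommSemiring R]
    [Semiring A] [Algebra R A] {a b : A} (ha : a ∈ Algebra.adjoin R {a + b})
    (hb : b ∈ Algebra.adjoin R {a + b}) :
    Algebra.adjoin R {a + b} = Algebra.adjoin R {a, b} := by
  refine le_antisymm (Algebra.adjoin_le ?_) (Algebra.adjoin_le ?_)
  · simpa using add_mem (Algebra.subset_adjoin (by simp)) (Algebra.subset_adjoin (by simp))
  · simpa [Set.insert_subset_iff] using ⟨ha, hb⟩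

theorem minpoly_eq_pow_of_aeval_pow_eq_zero {K A : Type*} [Field K] [Ring A] [Algebra K A]
    {a : A} {p : K[X]} (hp : Irreducible p) (hmonic : p.Monic) {k : ℕ}
    (hk : aeval a p ^ (k + 1) = 0) (hk' : aeval a p ^ k ≠ 0) :
    minpoly K a = p ^ (k + 1) := by
  rw [← map_pow] at hk hk'
  have hint : IsIntegral K a := ⟨p ^ (k + 1), hmonic.pow _, hk⟩
  obtain ⟨i, hi, hass⟩ := (dvd_prime_pow hp.prime _).mp (minpoly.dvd K a hk)
  have hik : i = k + 1 := by
    by_contra hne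
    exact hk' (minpoly.dvd_iff.mp ((hass.dvd_iff_dvd_left).mpr (pow_dvd_pow p (by omega))))
  rw [eq_of_monic_of_associated (minpoly.monic hint) (hmonic.pow i) hass, hik]

theorem Matrix.charpoly_eq_minpoly_of_natDegree_eq_card {ι K : Type*} [Fintype ι] [DecidableEq ι]
    [Field K] {A : Matrix ι ι K} (h : (minpoly K A).natDegree = Fintype.card ι) :
    A.charpoly = minpoly K A :=
  eq_of_monic_of_dvd_of_natDegree_le (minpoly.monic A.isIntegral) A.charpoly_monic
    A.minpoly_dvd_charpoly (by rw [charpoly_natDegree_eq_dim, h])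

theorem sq_add_one_pow_eq_zero_iff {A : Type*} [Ring A] {S N : A} (h2 : IsUnit (2 : A))
    (hS : S ^ 2 = -1) (hN : IsNilpotent N) (hc : Commute S N) (k : ℕ) :
    ((S + N) ^ 2 + 1) ^ k = 0 ↔ N ^ k = 0 := by
  have hSS : S * S = -1 := by rw [← sq, hS]
  have hfactor : (S + N) ^ 2 + 1 = N * (2 * S + N) := by
    rw [sq, add_mul, mul_add, mul_add, hSS, hc.eq, mul_add, two_mul, mul_add]; abel
  have hSunit : IsUnit S :=
    ⟨⟨S, -S, by rw [mul_neg, hSS, neg_neg], by rw [neg_mul, hSS, neg_neg]⟩, rfl⟩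
  have hN2S : Commute N (2 * S) := (Commute.ofNat_right N 2).mul_right hc.symm
  have hunit : IsUnit (2 * S + N) := hN.isUnit_add_left_of_commute (h2.mul hSunit) hN2S
  have hcomm : Commute N (2 * S + N) := hN2S.add_right (Commute.refl N)
  rw [hfactor, hcomm.mul_pow, (hunit.pow k).mul_left_eq_zero]

theorem Real.irreducible_X_sq_add_one : Irreducible (X ^ 2 + 1 : ℝ[X]) := by
  simpa using X_pow_sub_C_irreducible_of_prime Nat.prime_two (a := (-1 : ℝ))
    fun b hb => by nlinarith [sq_nonneg b]

section ConcreteMatrices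

variable (R : Type*) [Ring R] (n : ℕ)

def shiftMatrix (d : ℕ) : Matrix (Fin n) (Fin n) R :=
  of fun i j => if (j : ℕ) = i + d then 1 else 0

/-- The paper's `M_s` with `0`-based indices: diagonal blocks `!![0, -1; 1, 0]`. -/
def standardComplexStructure : Matrix (Fin n) (Fin n) R :=
  of fun i j =>
    if (j : ℕ) = i + 1 ∧ Even (i : ℕ) then -1
    else if (i : ℕ) = j + 1 ∧ Even (j : ℕ) then 1 else 0

variable {R n}

theorem shiftMatrix_mul_apply (d : ℕ) (A : Matrix (Fin n) (Fin n) R) (i j : Fin n) :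
    (shiftMatrix R n d * A) i j = if h : i + d < n then A ⟨i + d, h⟩ j else 0 := by
  rw [mul_apply]
  split_ifs with h
  · rw [Fintype.sum_eq_single ⟨i + d, h⟩ fun k hk => ?_]
    · simp [shiftMatrix]
    · simp [shiftMatrix, Fin.ext_iff.not.mp hk]
  · refine Finset.sum_eq_zero fun k _ => ?_
    simp [shiftMatrix, show (k : ℕ) ≠ i + d by omega]

theorem shiftMatrix_mul (d e : ℕ) :
    shiftMatrix R n d * shiftMatrix R n e = shiftMatrix R n (d + e) := by
  ext i j
  rw [shiftMatrix_mul_apply]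
  simp only [shiftMatrix, of_apply]
  split_ifs <;> grind

theorem shiftMatrix_zero : shiftMatrix R n 0 = 1 := by
  ext i j
  simp [shiftMatrix, one_apply, Fin.ext_iff, eq_comm]

theorem shiftMatrix_pow (d k : ℕ) : shiftMatrix R n d ^ k = shiftMatrix R n (d * k) := by
  induction k with
  | zero => exact shiftMatrix_zero.symm
  | succ k ih => rw [pow_succ, ih, shiftMatrix_mul, mul_add_one]

theorem shiftMatrix_eq_zero_iff [Nontrivial R] (d : ℕ) : shiftMatrix R n d = 0 ↔ n ≤ d := by
  refine ⟨fun h => ?_, fun h => ?_⟩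
  · by_contra! hd
    have := congr_fun₂ h ⟨0, by omega⟩ ⟨d, hd⟩
    simp [shiftMatrix] at this
  · ext i j
    simp only [shiftMatrix, of_apply, Matrix.zero_apply]
    rw [if_neg (by omega)]

theorem standardComplexStructure_mul_apply (hn : Even n) (A : Matrix (Fin n) (Fin n) R)
    (i j : Fin n) :
    (standardComplexStructure R n * A) i j =
      if h : Even (i : ℕ) then -A ⟨i + 1, by grind⟩ j else A ⟨i - 1, by grind⟩ j := by
  rw [mul_apply]
  split_ifs with h
  · rw [Fintype.sum_eq_single ⟨i + 1, by grind⟩ fun k hk => ?_]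
    · simp only [standardComplexStructure, of_apply]
      rw [if_pos (by grind), neg_one_mul]
    · rw [ne_eq, Fin.ext_iff, Fin.val_mk] at hk
      simp only [standardComplexStructure, of_apply]
      rw [if_neg (by grind), if_neg (by grind), zero_mul]
  · rw [Fintype.sum_eq_single ⟨i - 1, by grind⟩ fun k hk => ?_]
    · simp only [standardComplexStructure, of_apply]
      rw [if_neg (by grind), if_pos (by grind), one_mul]
    · rw [ne_eq, Fin.ext_iff, Fin.val_mk] at hk
      simp only [standardComplexStructure, of_apply]
      rw [if_neg (by grind), if_neg (by grind), zero_mul]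

theorem standardComplexStructure_sq (hn : Even n) : standardComplexStructure R n ^ 2 = -1 := by
  ext i j
  rw [sq, standardComplexStructure_mul_apply hn]
  simp only [standardComplexStructure, of_apply, Matrix.neg_apply, one_apply, Fin.ext_iff]
  split_ifs <;> grind

theorem commute_standardComplexStructure_shiftMatrix (hn : Even n) {d : ℕ} (hd : Even d) :
    Commute (standardComplexStructure R n) (shiftMatrix R n d) := by
  ext i j
  rw [standardComplexStructure_mul_apply hn, shiftMatrix_mul_apply]
  simp only [standardComplexStructure, shiftMatrix, of_apply]
  split_ifs <;> grind

end ConcreteMatrices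

/-- for even n ≥ 4, the matrices M_s and M_n commute,
M_s² = −I, M_n^{n/2} = 0, they are the semisimple and nilpotent parts of
M₀₁ = M_s + M_n, both are polynomials in M₀₁ (so ℝ[M₀₁] = ℝ[M_s, M_n]), and
M₀₁ is nonderogatory with characteristic polynomial (X²+1)^{n/2}. -/
theorem stmt18 {n : ℕ} (hn : 4 ≤ n) (hev : Even n)
    (Ms Mn : Matrix (Fin n) (Fin n) ℝ)
    (hMs : Ms = Matrix.of (fun i j : Fin n =>
      if (j : ℕ) = (i : ℕ) + 1 ∧ Even (i : ℕ) then (-1 : ℝ)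
      else if (i : ℕ) = (j : ℕ) + 1 ∧ Even (j : ℕ) then 1 else 0))
    (hMn : Mn = Matrix.of (fun i j : Fin n =>
      if (j : ℕ) = (i : ℕ) + 2 then (1 : ℝ) else 0)) :
    Ms * Mn = Mn * Ms ∧
    Ms ^ 2 = -1 ∧
    Mn ^ (n / 2) = 0 ∧
    Module.End.IsSemisimple (Matrix.mulVecLin Ms) ∧
    IsNilpotent Mn ∧
    Ms ∈ Algebra.adjoin ℝ ({Ms + Mn} : Set (Matrix (Fin n) (Fin n) ℝ)) ∧
    Mn ∈ Algebra.adjoin ℝ ({Ms + Mn} : Set (Matrix (Fin n) (Fin n) ℝ)) ∧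
    Algebra.adjoin ℝ ({Ms + Mn} : Set (Matrix (Fin n) (Fin n) ℝ))
      = Algebra.adjoin ℝ ({Ms, Mn} : Set (Matrix (Fin n) (Fin n) ℝ)) ∧
    (Ms + Mn).charpoly = (X ^ 2 + 1) ^ (n / 2) ∧
    minpoly ℝ (Ms + Mn) = (Ms + Mn).charpoly := by
  obtain ⟨m, hm⟩ : ∃ m, n = 2 * (m + 1) := ⟨n / 2 - 1, by grind⟩
  rw [show n / 2 = m + 1 by omega]
  change Ms = standardComplexStructure ℝ n at hMs
  change Mn = shiftMatrix ℝ n 2 at hMn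
  have hsq : Ms ^ 2 = -1 := hMs ▸ standardComplexStructure_sq hev
  have hc : Commute Ms Mn :=
    hMs ▸ hMn ▸ commute_standardComplexStructure_shiftMatrix hev even_two
  have hMn_pow (k : ℕ) : Mn ^ k = 0 ↔ n ≤ 2 * k := by
    rw [hMn, shiftMatrix_pow, shiftMatrix_eq_zero_iff]
  have hMn_nil : Mn ^ (m + 1) = 0 := (hMn_pow _).mpr hm.le
  have hMs_ss : Module.End.IsSemisimple Ms.mulVecLin := by
    refine Module.End.isSemisimple_of_squarefree_aeval_eq_zero
      Real.irreducible_X_sq_add_one.squarefree ?_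
    change aeval (toLinAlgEquiv' Ms) _ = 0
    simp [aeval_algEquiv, hsq]
  obtain ⟨hMs_mem, hMn_mem⟩ :=
    Matrix.mem_adjoin_of_isSemisimple_of_isNilpotent hMs_ss ⟨_, hMn_nil⟩ hc
  have h2 : IsUnit (2 : Matrix (Fin n) (Fin n) ℝ) := by
    rw [← map_ofNat (algebraMap ℝ (Matrix (Fin n) (Fin n) ℝ)) 2]
    exact (IsUnit.mk0 (2 : ℝ) two_ne_zero).map _
  have hM_pow (k : ℕ) : aeval (Ms + Mn) (X ^ 2 + 1 : ℝ[X]) ^ k = 0 ↔ n ≤ 2 * k := by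
    simpa using (sq_add_one_pow_eq_zero_iff h2 hsq ⟨_, hMn_nil⟩ hc k).trans (hMn_pow k)
  have hmin : minpoly ℝ (Ms + Mn) = (X ^ 2 + 1) ^ (m + 1) :=
    minpoly_eq_pow_of_aeval_pow_eq_zero Real.irreducible_X_sq_add_one
      (monic_X_pow_add_C 1 two_ne_zero) ((hM_pow _).mpr hm.le) (by rw [ne_eq, hM_pow]; omega)
  have hchar : (Ms + Mn).charpoly = minpoly ℝ (Ms + Mn) := by
    refine charpoly_eq_minpoly_of_natDegree_eq_card ?_
    rw [hmin, natDegree_pow, ← C_1, natDegree_X_pow_add_C, Fintype.card_fin, hm, mul_comm]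
  exact ⟨hc.eq, hsq, hMn_nil, hMs_ss, ⟨_, hMn_nil⟩, hMs_mem, hMn_mem,
    Algebra.adjoin_singleton_add_eq_adjoin_pair hMs_mem hMn_mem, hchar.trans hmin, hchar.symm⟩
end
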